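/- arXiv:2105.10839 — 3 statements merged into one kernel-verified Lean document; each statement's English description precedes it below -/
import Mathlib

section
/- (Per-group expectation bound underlying the proofs of Theorems 2 and 4) Let P_1,…,P_N be mutually independent p-values with P_i ~ Uniform(0,1) for each i ∈ I^0. Fix λ ∈ (0,1) and a group g ⊆ {1,…,N} with |g| = n_g, and let I^0_g = g ∩ I^0. For p ∈ [0,1]^N let R_g(p) = #{j ∈ g : p_j ≤ λ}, and let (P^{(−i)},0) denote P with its i-th coordinate replaced by 0. Then E[ Σ_{i ∈ I^0_g} (1−λ)/(n_g − R_g((P^{(−i)},0)) + 1) ] ≤ 1. -/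
open MeasureTheory ProbabilityTheory Finset

/-- Number of rejections of the (weighted) BH step-up procedure at level `α`,
applied to the (weighted) p-values `Q`: the largest `j ≤ N` such that at least `j`
of the values `Q i` are `≤ j*α/N` (this is `0`, i.e. no rejections, when no such
`j ≥ 1` exists). -/
noncomputable def bhNumRejections (N : ℕ) (α : ℝ) (Q : Fin N → ℝ) : ℕ :=
  ((Finset.range (N + 1)).filter
      (fun j : ℕ => j ≤ (Finset.univ.filter (fun i : Fin N => Q i ≤ (j : ℝ) * α / N)).card)).sup id

/-- The set of indices rejected by the level-`α` BH procedure applied to `Q`. -/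
noncomputable def bhRejected (N : ℕ) (α : ℝ) (Q : Fin N → ℝ) : Finset (Fin N) :=
  Finset.univ.filter (fun i => Q i ≤ (bhNumRejections N α Q : ℝ) * α / N)

/-- False discovery proportion `V / max(R,1)` of the level-`α` BH procedure. -/
noncomputable def FDP (N : ℕ) (α : ℝ) (I0 : Finset (Fin N)) (Q : Fin N → ℝ) : ℝ :=
  ((bhRejected N α Q ∩ I0).card : ℝ) / max ((bhRejected N α Q).card : ℝ) 1

/-- False discovery rate `E[V / max(R,1)]` of the level-`α` BH procedure applied to
the (random, possibly weighted) p-values `Q ω`. -/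
noncomputable def FDR {Ω : Type*} [MeasurableSpace Ω] (μ : Measure Ω)
    (N : ℕ) (α : ℝ) (I0 : Finset (Fin N)) (Q : Ω → Fin N → ℝ) : ℝ :=
  ∫ ω, FDP N α I0 (Q ω) ∂μ

/-- Assumption 1: each null p-value is Uniform(0,1) (stated via its cdf). -/
def UniformNulls {Ω : Type*} [MeasurableSpace Ω] (μ : Measure Ω)
    {N : ℕ} (P : Ω → Fin N → ℝ) (I0 : Finset (Fin N)) : Prop :=
  ∀ i ∈ I0, ∀ x ∈ Set.Icc (0 : ℝ) 1, μ {ω | P ω i ≤ x} = ENNReal.ofReal x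

/-- Assumption 2: the p-values are PRDS on the subset of null p-values. -/
def PRDSNulls {Ω : Type*} [MeasurableSpace Ω] (μ : Measure Ω)
    {N : ℕ} (P : Ω → Fin N → ℝ) (I0 : Finset (Fin N)) : Prop :=
  ∀ i ∈ I0, ∀ φ : (Fin N → ℝ) → ℝ, Measurable φ → (∃ C, ∀ p, |φ p| ≤ C) →
    (∀ p q : Fin N → ℝ, (∀ j, p j ≤ q j) → φ p ≤ φ q) →
    ∀ x y : ℝ, 0 < x → x ≤ y → y ≤ 1 →
      (∫ ω in {ω | P ω i ≤ x}, φ (P ω) ∂μ) / (μ {ω | P ω i ≤ x}).toReal ≤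
        (∫ ω in {ω | P ω i ≤ y}, φ (P ω) ∂μ) / (μ {ω | P ω i ≤ y}).toReal

/-- Per-group expectation bound underlying the proofs of Theorems 2 and 4. -/
theorem per_group_expectation_bound
    {Ω : Type*} [MeasurableSpace Ω] (μ : Measure Ω) [IsProbabilityMeasure μ]
    {N : ℕ} (P : Ω → Fin N → ℝ) (hPmeas : Measurable P)
    (hPrange : ∀ ω i, P ω i ∈ Set.Icc (0 : ℝ) 1)
    (I0 : Finset (Fin N))
    (hUnif : UniformNulls μ P I0)
    (hIndep : iIndepFun (fun i ω => P ω i) μ)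
    (lam : ℝ) (hlam : lam ∈ Set.Ioo (0 : ℝ) 1)
    (g : Finset (Fin N)) :
    ∫ ω, ∑ i ∈ g ∩ I0,
        (1 - lam) /
          ((g.card : ℝ) -
            (((g.filter (fun j => Function.update (P ω) i 0 j ≤ lam)).card : ℝ)) + 1) ∂μ
      ≤ 1 := by
  classical
  obtain ⟨hlam0, hlam1⟩ := hlam
  set n : ℕ := g.card with hn
  set cnt : Fin N → Ω → ℕ := fun i ω => ((g.erase i).filter (fun j => P ω j ≤ lam)).card
    with hcntdef
  set Y : Fin N → Ω → ℝ := fun i ω => ((n : ℝ) - cnt i ω)⁻¹ with hYdef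
  set X : Fin N → Ω → ℝ := fun i ω => if lam < P ω i then (1 : ℝ) else 0 with hXdef
  have hPi : ∀ j : Fin N, Measurable fun ω => P ω j :=
    fun j => (measurable_pi_apply j).comp hPmeas
  -- denominator rewrite
  have hden : ∀ ω, ∀ i ∈ g,
      ((g.card : ℝ) - (((g.filter (fun j => Function.update (P ω) i 0 j ≤ lam)).card : ℝ)) + 1)
        = (n : ℝ) - cnt i ω := by
    intro ω i hi
    have hfilter : g.filter (fun j => Function.update (P ω) i 0 j ≤ lam)
        = insert i ((g.erase i).filter (fun j => P ω j ≤ lam)) := by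
      ext j
      simp only [Finset.mem_filter, Finset.mem_insert, Finset.mem_erase]
      constructor
      · rintro ⟨hjg, hj⟩
        by_cases h : j = i
        · exact Or.inl h
        · exact Or.inr ⟨⟨h, hjg⟩, by rwa [Function.update_of_ne h] at hj⟩
      · rintro (rfl | ⟨⟨hne, hjg⟩, hj⟩)
        · refine ⟨hi, ?_⟩
          rw [Function.update_self]
          linarith
        · exact ⟨hjg, by rwa [Function.update_of_ne hne]⟩
    rw [hfilter, Finset.card_insert_of_notMem (by simp)]
    push_cast
    ring
  -- denominator positivity
  have hpos : ∀ i ∈ g, ∀ ω, 1 ≤ (n : ℝ) - cnt i ω := by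
    intro i hi ω
    have h1 : cnt i ω + 1 ≤ n := by
      have h2 : cnt i ω ≤ (g.erase i).card := Finset.card_filter_le _ _
      have h3 : (g.erase i).card = n - 1 := by rw [Finset.card_erase_of_mem hi]
      have hn1 : 1 ≤ n := Finset.card_pos.mpr ⟨i, hi⟩
      omega
    have := (Nat.cast_le (α := ℝ)).mpr h1
    push_cast at this
    linarith
  have hYmem : ∀ i ∈ g, ∀ ω, 0 < Y i ω ∧ Y i ω ≤ 1 := by
    intro i hi ω
    have h1 := hpos i hi ω
    constructor
    · exact inv_pos.mpr (by linarith)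
    · exact inv_le_one_of_one_le₀ h1
  -- cnt as a real sum
  have hcnt_eq : ∀ i ω, ((cnt i ω : ℝ)) = ∑ j ∈ g.erase i, if P ω j ≤ lam then (1 : ℝ) else 0 :=
    fun i ω => Finset.natCast_card_filter _ _
  -- measurability of Y
  have hYmeas : ∀ i, Measurable (Y i) := by
    intro i
    have : Measurable fun ω => ((cnt i ω : ℝ)) := by
      simp only [hcnt_eq]
      exact Finset.measurable_sum _ fun j _ =>
        Measurable.ite (measurableSet_le (hPi j) measurable_const) measurable_const
          measurable_const
    exact (measurable_const.sub this).inv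
  have hXmeas : ∀ i, Measurable (X i) := fun i =>
    Measurable.ite (measurableSet_lt measurable_const (hPi i)) measurable_const measurable_const
  -- integrability helpers
  have hYint : ∀ i ∈ g, Integrable (Y i) μ := by
    intro i hi
    refine (integrable_const (1 : ℝ)).mono' (hYmeas i).aestronglyMeasurable
      (Filter.Eventually.of_forall fun ω => ?_)
    obtain ⟨h1, h2⟩ := hYmem i hi ω
    rw [Real.norm_eq_abs, abs_of_pos h1]
    simpa using h2
  have hXYint : ∀ i ∈ g, Integrable (fun ω => X i ω * Y i ω) μ := by
    intro i hi
    refine (integrable_const (1 : ℝ)).mono'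
      (((hXmeas i).mul (hYmeas i)).aestronglyMeasurable)
      (Filter.Eventually.of_forall fun ω => ?_)
    obtain ⟨h1, h2⟩ := hYmem i hi ω
    rw [Real.norm_eq_abs]
    by_cases h : lam < P ω i
    · simp only [hXdef, if_pos h, one_mul]
      rw [abs_of_pos h1]; simpa using h2
    · simp [hXdef, if_neg h]
  -- ∫ X i = 1 - lam for null i
  have hXint : ∀ i ∈ I0, ∫ ω, X i ω ∂μ = 1 - lam := by
    intro i hi
    have hAmeas : MeasurableSet {ω | lam < P ω i} := measurableSet_lt measurable_const (hPi i)
    have hXind : X i = Set.indicator {ω | lam < P ω i} (fun _ => (1 : ℝ)) := by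
      funext ω
      simp [hXdef, Set.indicator_apply, Set.mem_setOf_eq]
    have hcompl : {ω | lam < P ω i} = {ω | P ω i ≤ lam}ᶜ := by
      ext ω; simp [not_le]
    have hmu : μ {ω | P ω i ≤ lam} = ENNReal.ofReal lam :=
      hUnif i hi lam ⟨le_of_lt hlam0, le_of_lt hlam1⟩
    have hBmeas : MeasurableSet {ω | P ω i ≤ lam} := measurableSet_le (hPi i) measurable_const
    have hmuc : μ {ω | lam < P ω i} = 1 - ENNReal.ofReal lam := by
      rw [hcompl, measure_compl hBmeas (measure_ne_top μ _), hmu, measure_univ]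
    rw [hXind, integral_indicator_const _ hAmeas, measureReal_def, hmuc, smul_eq_mul, mul_one]
    rw [ENNReal.toReal_sub_of_le (by simpa using ENNReal.ofReal_le_one.mpr (le_of_lt hlam1)) ENNReal.one_ne_top]
    rw [ENNReal.toReal_one, ENNReal.toReal_ofReal (le_of_lt hlam0)]
  -- independence of X i and Y i
  have hXYindep : ∀ i, IndepFun (X i) (Y i) μ := by
    intro i
    have hdisj : Disjoint ({i} : Finset (Fin N)) (g.erase i) := by simp
    have hind := hIndep.indepFun_finset {i} (g.erase i) hdisj hPi
    set φ : (↥({i} : Finset (Fin N)) → ℝ) → ℝ :=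
      fun v => if lam < v ⟨i, Finset.mem_singleton_self i⟩ then (1 : ℝ) else 0 with hφdef
    set ψ : (↥(g.erase i) → ℝ) → ℝ :=
      fun v => ((n : ℝ) - ∑ k : ↥(g.erase i), if v (k : ↥(g.erase i)) ≤ lam then (1 : ℝ) else 0)⁻¹
      with hψdef
    have hφmeas : Measurable φ :=
      Measurable.ite (measurableSet_lt measurable_const (measurable_pi_apply _))
        measurable_const measurable_const
    have hψmeas : Measurable ψ :=
      (measurable_const.sub (Finset.measurable_sum _ fun k _ =>
        Measurable.ite (measurableSet_le (measurable_pi_apply k) measurable_const)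
          measurable_const measurable_const)).inv
    have := hind.comp hφmeas hψmeas
    have hXeq : X i = φ ∘ (fun ω (k : ↥({i} : Finset (Fin N))) => P ω k) := rfl
    have hYeq : Y i = ψ ∘ (fun ω (k : ↥(g.erase i)) => P ω k) := by
      funext ω
      simp only [hYdef, hψdef, Function.comp_apply]
      rw [Finset.sum_coe_sort (g.erase i) (fun k => if P ω k ≤ lam then (1 : ℝ) else 0)]
      rw [hcnt_eq]
    rw [hXeq, hYeq]
    exact this
  -- pointwise bound on the sum of X i * Y i
  have key : ∀ ω, ∑ i ∈ g ∩ I0, X i ω * Y i ω ≤ 1 := by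
    intro ω
    set R : ℕ := (g.filter (fun j => P ω j ≤ lam)).card with hRdef
    have hterm : ∀ i ∈ g ∩ I0,
        X i ω * Y i ω = if lam < P ω i then ((n : ℝ) - R)⁻¹ else 0 := by
      intro i hi
      by_cases h : lam < P ω i
      · have hcntR : cnt i ω = R := by
          simp only [hcntdef, hRdef, Finset.filter_erase]
          rw [Finset.erase_eq_of_notMem]
          simp only [Finset.mem_filter, not_and]
          intro _
          exact not_le.mpr h
        simp [hXdef, hYdef, h, hcntR]
      · simp [hXdef, h]
    rw [Finset.sum_congr rfl hterm, ← Finset.sum_filter, Finset.sum_const, nsmul_eq_mul]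
    have hRn : R ≤ n := Finset.card_filter_le _ _
    have hcard : ((g ∩ I0).filter (fun i => lam < P ω i)).card
        ≤ (g.filter (fun i => lam < P ω i)).card :=
      Finset.card_le_card (Finset.filter_subset_filter _ Finset.inter_subset_left)
    have hsplit : (g.filter (fun i => lam < P ω i)).card = n - R := by
      have h1 := Finset.card_filter_add_card_filter_not
        (s := g) (p := fun j => P ω j ≤ lam)
      have h2 : g.filter (fun j => ¬ P ω j ≤ lam) = g.filter (fun i => lam < P ω i) := by
        apply Finset.filter_congr
        intro j _
        simp [not_le]
      rw [h2] at h1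
      omega
    have hcast : (n : ℝ) - R = ((n - R : ℕ) : ℝ) := by
      push_cast [Nat.cast_sub hRn]
      ring
    rw [hcast]
    rcases Nat.eq_zero_or_pos (n - R) with h0 | h0
    · have : ((g ∩ I0).filter (fun i => lam < P ω i)).card = 0 := by omega
      rw [this]
      simp
    · have hposR : (0 : ℝ) < ((n - R : ℕ) : ℝ) := by exact_mod_cast h0
      rw [← div_eq_mul_inv, div_le_one hposR]
      exact_mod_cast hcard.trans_eq hsplit
  -- main chain
  have hrw : ∀ ω, ∑ i ∈ g ∩ I0,
      (1 - lam) /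
        ((g.card : ℝ) -
          (((g.filter (fun j => Function.update (P ω) i 0 j ≤ lam)).card : ℝ)) + 1)
      = ∑ i ∈ g ∩ I0, (1 - lam) * Y i ω := by
    intro ω
    refine Finset.sum_congr rfl fun i hi => ?_
    rw [hden ω i (Finset.mem_of_mem_inter_left hi), div_eq_mul_inv]
  calc ∫ ω, ∑ i ∈ g ∩ I0,
        (1 - lam) /
          ((g.card : ℝ) -
            (((g.filter (fun j => Function.update (P ω) i 0 j ≤ lam)).card : ℝ)) + 1) ∂μ
      = ∫ ω, ∑ i ∈ g ∩ I0, (1 - lam) * Y i ω ∂μ := by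
        refine integral_congr_ae (Filter.Eventually.of_forall fun ω => hrw ω)
    _ = ∑ i ∈ g ∩ I0, ∫ ω, (1 - lam) * Y i ω ∂μ :=
        integral_finset_sum _ fun i hi =>
          ((hYint i (Finset.mem_of_mem_inter_left hi)).const_mul _)
    _ = ∑ i ∈ g ∩ I0, ∫ ω, X i ω * Y i ω ∂μ := by
        refine Finset.sum_congr rfl fun i hi => ?_
        have hig := Finset.mem_of_mem_inter_left hi
        have hiI0 := Finset.mem_of_mem_inter_right hi
        rw [integral_const_mul, ← hXint i hiI0,
          ← (hXYindep i).integral_mul_eq_mul_integral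
            (hXmeas i).aestronglyMeasurable
            (hYmeas i).aestronglyMeasurable]
        rfl
    _ = ∫ ω, ∑ i ∈ g ∩ I0, X i ω * Y i ω ∂μ :=
        (integral_finset_sum _ fun i hi =>
          hXYint i (Finset.mem_of_mem_inter_left hi)).symm
    _ ≤ ∫ (_ : Ω), (1 : ℝ) ∂μ := by
        exact integral_mono (integrable_finset_sum _ fun i hi =>
          hXYint i (Finset.mem_of_mem_inter_left hi)) (integrable_const 1) fun ω => key ω
    _ = 1 := by simp
end

section
/- (Key expectation bound in the proof of Theorem 4) Let P_1,…,P_N be mutually independent p-values with P_i ~ Uniform(0,1) for each i ∈ I^0. Fix λ ∈ (0,1). Let S classification criteria each partition {1,…,N}: classification s partitions {1,…,N} into nonempty groups g_s = 1,…,M_s of sizes n_{g_s}, and g_s(i) denotes the group of index i under classification s. For p ∈ [0,1]^N define R_{g_s}(p) = #{i in group g_s : p_i ≤ λ}, ŵ_{g_s}(p) = M_s·(n_{g_s} − R_{g_s}(p) + 1)/(N(1−λ)), and Ŵ_i(p) = [ (1/S)·Σ_{s=1}^S 1/ŵ_{g_s(i)}(p) ]^{-1}. Then E[ Σ_{i ∈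 I^0} 1/Ŵ_i((P^{(−i)},0)) ] ≤ N, where (P^{(−i)},0) denotes P with its i-th coordinate replaced by 0. -/
open MeasureTheory ProbabilityTheory Finset

lemma measY {Ω : Type*} [MeasurableSpace Ω] {N : ℕ} (P : Ω → Fin N → ℝ)
    (hP : Measurable P) (lam : ℝ) (t : Finset (Fin N)) :
    Measurable (fun ω => (1 + (((t.filter (fun j => lam < P ω j)).card : ℝ)))⁻¹) := by
  have h : ∀ ω, ((t.filter (fun j => lam < P ω j)).card : ℝ)
      = ∑ j ∈ t, (if lam < P ω j then (1:ℝ) else 0) := by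
    intro ω; simp [Finset.sum_boole]
  simp_rw [h]
  exact (measurable_const.add (Finset.measurable_sum t (fun j _ =>
    Measurable.ite (measurableSet_lt measurable_const ((measurable_pi_apply j).comp hP))
      measurable_const measurable_const))).inv

lemma sumXY_le_one {N : ℕ} (lam : ℝ) (p : Fin N → ℝ) (G S0 : Finset (Fin N)) (hS0 : S0 ⊆ G) :
    ∑ i ∈ S0, (if lam < p i then (1:ℝ) else 0) *
      (1 + (((G.erase i).filter (fun j => lam < p j)).card : ℝ))⁻¹ ≤ 1 := by
  classical
  set F := G.filter (fun j => lam < p j) with hF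
  have hterm : ∀ i ∈ S0, (if lam < p i then (1:ℝ) else 0) *
      (1 + (((G.erase i).filter (fun j => lam < p j)).card : ℝ))⁻¹
      = (if i ∈ F then ((F.card : ℝ))⁻¹ else 0) := by
    intro i hi
    by_cases h : lam < p i
    · have hiF : i ∈ F := Finset.mem_filter.2 ⟨hS0 hi, h⟩
      have hcard : ((G.erase i).filter (fun j => lam < p j)).card + 1 = F.card := by
        rw [Finset.filter_erase, ← hF]
        exact Finset.card_erase_add_one hiF
      have : (1 : ℝ) + (((G.erase i).filter (fun j => lam < p j)).card : ℝ) = (F.card : ℝ) := by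
        rw [← hcard]; push_cast; ring
      simp [h, hiF, this]
    · have hiF : i ∉ F := by simp [hF, h]
      simp [h, hiF]
  rw [Finset.sum_congr rfl hterm, Finset.sum_ite_mem]
  rw [Finset.sum_const, nsmul_eq_mul]
  rcases Nat.eq_zero_or_pos F.card with h0 | hpos
  · simp [h0]
  · calc ((S0 ∩ F).card : ℝ) * ((F.card : ℝ))⁻¹
        ≤ (F.card : ℝ) * ((F.card : ℝ))⁻¹ := by
          apply mul_le_mul_of_nonneg_right _ (by positivity)
          exact_mod_cast Finset.card_le_card (Finset.inter_subset_right)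
      _ = 1 := mul_inv_cancel₀ (by positivity)


lemma perI {Ω : Type*} [MeasurableSpace Ω] (μ : Measure Ω) [IsProbabilityMeasure μ]
    {N : ℕ} (P : Ω → Fin N → ℝ) (hPmeas : Measurable P)
    (hIndep : iIndepFun (fun i ω => P ω i) μ)
    (lam : ℝ) (hlam : lam ∈ Set.Ioo (0 : ℝ) 1)
    (i : Fin N) (hUi : μ {ω | P ω i ≤ lam} = ENNReal.ofReal lam) (G : Finset (Fin N)) :
    ∫ ω, (1 + (((G.erase i).filter (fun j => lam < P ω j)).card : ℝ))⁻¹ ∂μ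
      = (1 - lam)⁻¹ * ∫ ω, (if lam < P ω i then (1:ℝ) else 0) *
          (1 + (((G.erase i).filter (fun j => lam < P ω j)).card : ℝ))⁻¹ ∂μ := by
  classical
  set X : Ω → ℝ := fun ω => if lam < P ω i then (1:ℝ) else 0 with hX
  set Y : Ω → ℝ := fun ω => (1 + (((G.erase i).filter (fun j => lam < P ω j)).card : ℝ))⁻¹ with hY
  have hPim : ∀ j : Fin N, Measurable (fun ω => P ω j) :=
    fun j => (measurable_pi_apply j).comp hPmeas
  have hdis : Disjoint ({i} : Finset (Fin N)) (G.erase i) := by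
    simp [Finset.disjoint_left]
  have hbase := hIndep.indepFun_finset {i} (G.erase i) hdis hPim
  have hiT : i ∈ ({i} : Finset (Fin N)) := Finset.mem_singleton_self i
  set φ : ({ x // x ∈ ({i} : Finset (Fin N)) } → ℝ) → ℝ :=
    fun v => if lam < v ⟨i, hiT⟩ then 1 else 0 with hφ
  set ψ : ({ x // x ∈ G.erase i } → ℝ) → ℝ :=
    fun v => (1 + ∑ j : { x // x ∈ G.erase i }, (if lam < v j then (1:ℝ) else 0))⁻¹ with hψ
  have hφm : Measurable φ := Measurable.ite
    (measurableSet_lt measurable_const (measurable_pi_apply _)) measurable_const measurable_const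
  have hψm : Measurable ψ := by
    apply Measurable.inv
    exact measurable_const.add (Finset.measurable_sum _ (fun j _ =>
      Measurable.ite (measurableSet_lt measurable_const (measurable_pi_apply j))
        measurable_const measurable_const))
  have hXY : IndepFun X Y μ := by
    have h2 := hbase.comp hφm hψm
    have e1 : (φ ∘ fun a (x : { x // x ∈ ({i} : Finset (Fin N)) }) => P a x) = X := by
      funext a; simp [hφ, hX]
    have e2 : (ψ ∘ fun a (x : { x // x ∈ G.erase i }) => P a x) = Y := by
      funext a
      simp only [hψ, hY, Function.comp_apply]
      congr 2
      rw [Finset.sum_coe_sort (G.erase i) (fun j => if lam < P a j then (1:ℝ) else 0)]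
      simp [Finset.sum_boole]
    rwa [e1, e2] at h2
  have hXm : Measurable X := Measurable.ite
    (measurableSet_lt measurable_const (hPim i)) measurable_const measurable_const
  have hYm : Measurable Y := by
    have h : ∀ ω, (((G.erase i).filter (fun j => lam < P ω j)).card : ℝ)
        = ∑ j ∈ G.erase i, (if lam < P ω j then (1:ℝ) else 0) := by
      intro ω; simp [Finset.sum_boole]
    simp only [hY]
    simp_rw [h]
    exact (measurable_const.add (Finset.measurable_sum _ (fun j _ =>
      Measurable.ite (measurableSet_lt measurable_const (hPim j))
        measurable_const measurable_const))).inv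
  have hXp : 0 ≤ X := fun ω => by dsimp [hX]; positivity
  have hYp : 0 ≤ Y := fun ω => by dsimp [hY]; positivity
  have hmul := hXY.integral_mul_eq_mul_integral hXm.aestronglyMeasurable hYm.aestronglyMeasurable
  have hsetm : MeasurableSet {ω | P ω i ≤ lam} := measurableSet_le (hPim i) measurable_const
  have hcompl : {ω | lam < P ω i} = {ω | P ω i ≤ lam}ᶜ := by
    ext ω; simp [not_le]
  have hXint : ∫ ω, X ω ∂μ = 1 - lam := by
    have hind : X = Set.indicator {ω | lam < P ω i} (fun _ => (1:ℝ)) := by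
      funext ω
      by_cases h : lam < P ω i <;> simp [hX, Set.indicator, h]
    rw [hind, MeasureTheory.integral_indicator_const (1:ℝ) (by rw [hcompl]; exact hsetm.compl)]
    rw [hcompl, measureReal_def, measure_compl hsetm (measure_ne_top μ _), hUi, measure_univ]
    rw [ENNReal.toReal_sub_of_le (ENNReal.ofReal_le_one.2 hlam.2.le) ENNReal.one_ne_top]
    simp [ENNReal.toReal_ofReal hlam.1.le]
  have h1lam : (1:ℝ) - lam ≠ 0 := by have := hlam.2; linarith
  have hmul' : ∫ ω, X ω * Y ω ∂μ = (1 - lam) * ∫ ω, Y ω ∂μ := by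
    have h3 : ∫ ω, X ω * Y ω ∂μ = integral μ (X * Y) := rfl
    rw [h3, hmul, hXint]
  calc ∫ ω, Y ω ∂μ = (1 - lam)⁻¹ * ((1 - lam) * ∫ ω, Y ω ∂μ) := by field_simp
    _ = (1 - lam)⁻¹ * ∫ ω, X ω * Y ω ∂μ := by rw [hmul']

lemma measXY {Ω : Type*} [MeasurableSpace Ω] {N : ℕ} (P : Ω → Fin N → ℝ)
    (hP : Measurable P) (lam : ℝ) (i : Fin N) (t : Finset (Fin N)) :
    Measurable (fun ω => (if lam < P ω i then (1:ℝ) else 0) *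
      (1 + (((t.filter (fun j => lam < P ω j)).card : ℝ)))⁻¹) := by
  have hPim : ∀ j : Fin N, Measurable (fun ω => P ω j) :=
    fun j => (measurable_pi_apply j).comp hP
  have h : ∀ ω, ((t.filter (fun j => lam < P ω j)).card : ℝ)
      = ∑ j ∈ t, (if lam < P ω j then (1:ℝ) else 0) := by
    intro ω; simp [Finset.sum_boole]
  simp_rw [h]
  exact (Measurable.ite (measurableSet_lt measurable_const (hPim i)) measurable_const
      measurable_const).mul
    (measurable_const.add (Finset.measurable_sum t (fun j _ =>
      Measurable.ite (measurableSet_lt measurable_const (hPim j))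
        measurable_const measurable_const))).inv

lemma group_bound {Ω : Type*} [MeasurableSpace Ω] (μ : Measure Ω) [IsProbabilityMeasure μ]
    {N : ℕ} (P : Ω → Fin N → ℝ) (hPmeas : Measurable P)
    (hIndep : iIndepFun (fun i ω => P ω i) μ)
    (lam : ℝ) (hlam : lam ∈ Set.Ioo (0 : ℝ) 1)
    (G S0 : Finset (Fin N)) (hS0G : S0 ⊆ G)
    (hU : ∀ i ∈ S0, μ {ω | P ω i ≤ lam} = ENNReal.ofReal lam) :
    ∑ i ∈ S0, ∫ ω, (1 + (((G.erase i).filter (fun j => lam < P ω j)).card : ℝ))⁻¹ ∂μ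
      ≤ (1 - lam)⁻¹ := by
  classical
  have hint : ∀ i ∈ S0, Integrable (fun ω => (if lam < P ω i then (1:ℝ) else 0) *
      (1 + (((G.erase i).filter (fun j => lam < P ω j)).card : ℝ))⁻¹) μ := by
    intro i _
    refine (integrable_const (1:ℝ)).mono'
      (measXY P hPmeas lam i (G.erase i)).aestronglyMeasurable (ae_of_all _ fun ω => ?_)
    have hc : (0:ℝ) ≤ (((G.erase i).filter (fun j => lam < P ω j)).card : ℝ) := by positivity
    have h1 : (1 + (((G.erase i).filter (fun j => lam < P ω j)).card : ℝ))⁻¹ ≤ 1 := by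
      rw [inv_le_one_iff₀]; right; linarith
    have h2 : (0:ℝ) ≤ (1 + (((G.erase i).filter (fun j => lam < P ω j)).card : ℝ))⁻¹ := by
      positivity
    by_cases h : lam < P ω i
    · simp only [h, if_true, one_mul, Real.norm_eq_abs]
      rw [abs_of_nonneg h2]; exact h1
    · simp [h]
  have hstep : ∀ i ∈ S0,
      ∫ ω, (1 + (((G.erase i).filter (fun j => lam < P ω j)).card : ℝ))⁻¹ ∂μ
      = (1 - lam)⁻¹ * ∫ ω, (if lam < P ω i then (1:ℝ) else 0) *
          (1 + (((G.erase i).filter (fun j => lam < P ω j)).card : ℝ))⁻¹ ∂μ :=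
    fun i hi => perI μ P hPmeas hIndep lam hlam i (hU i hi) G
  rw [Finset.sum_congr rfl hstep, ← Finset.mul_sum]
  rw [← MeasureTheory.integral_finset_sum S0 hint]
  have hbound : ∫ ω, ∑ i ∈ S0, (if lam < P ω i then (1:ℝ) else 0) *
      (1 + (((G.erase i).filter (fun j => lam < P ω j)).card : ℝ))⁻¹ ∂μ ≤ 1 := by
    calc ∫ ω, ∑ i ∈ S0, (if lam < P ω i then (1:ℝ) else 0) *
          (1 + (((G.erase i).filter (fun j => lam < P ω j)).card : ℝ))⁻¹ ∂μ
        ≤ ∫ _ω, (1:ℝ) ∂μ := by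
          apply integral_mono (integrable_finset_sum S0 hint) (integrable_const 1)
          intro ω
          exact sumXY_le_one lam (P ω) G S0 hS0G
      _ = 1 := by simp
  have hpos : (0:ℝ) ≤ (1 - lam)⁻¹ := by
    have h' : (0:ℝ) < 1 - lam := by linarith [hlam.2]
    positivity
  calc (1 - lam)⁻¹ * ∫ ω, ∑ i ∈ S0, (if lam < P ω i then (1:ℝ) else 0) *
        (1 + (((G.erase i).filter (fun j => lam < P ω j)).card : ℝ))⁻¹ ∂μ
      ≤ (1 - lam)⁻¹ * 1 := mul_le_mul_of_nonneg_left hbound hpos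
    _ = (1 - lam)⁻¹ := mul_one _

/-- Key expectation bound in the proof of Theorem 4, for the DA-S-Way GBH weights. -/
theorem daSWayGBH_expectation_bound
    {Ω : Type*} [MeasurableSpace Ω] (μ : Measure Ω) [IsProbabilityMeasure μ]
    {N S : ℕ} (hN : 0 < N) (hS : 0 < S) (P : Ω → Fin N → ℝ) (hPmeas : Measurable P)
    (hPrange : ∀ ω i, P ω i ∈ Set.Icc (0 : ℝ) 1)
    (I0 : Finset (Fin N))
    (hUnif : UniformNulls μ P I0)
    (hIndep : iIndepFun (fun i ω => P ω i) μ)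
    (lam : ℝ) (hlam : lam ∈ Set.Ioo (0 : ℝ) 1)
    (c : Fin S → Fin N → Finset (Fin N))
    (hmem : ∀ s i, i ∈ c s i)
    (hpart : ∀ s, ∀ i j : Fin N, j ∈ c s i → c s j = c s i)
    (M : Fin S → ℕ) (hM : ∀ s, M s = (Finset.univ.image (c s)).card)
    (R : Fin S → Fin N → (Fin N → ℝ) → ℕ)
    (hR : ∀ s i p, R s i p = ((c s i).filter (fun j => p j ≤ lam)).card)
    (wh : Fin S → Fin N → (Fin N → ℝ) → ℝ)
    (hwh : ∀ s i p, wh s i p =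
      (M s : ℝ) * (((c s i).card : ℝ) - (R s i p : ℝ) + 1) / ((N : ℝ) * (1 - lam)))
    (Wh : Fin N → (Fin N → ℝ) → ℝ)
    (hWh : ∀ i p, Wh i p = ((1 / (S : ℝ)) * ∑ s, 1 / wh s i p)⁻¹) :
    ∫ ω, ∑ i ∈ I0, 1 / Wh i (Function.update (P ω) i 0) ∂μ ≤ (N : ℝ) := by
  have hUnif : ∀ i ∈ I0, ∀ x ∈ Set.Icc (0 : ℝ) 1, μ {ω | P ω i ≤ x} = ENNReal.ofReal x := hUnif

  classical
  set K : ℝ := (N : ℝ) * (1 - lam) / S with hK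
  set Yf : Fin S → Fin N → Ω → ℝ := fun s i ω =>
    (1 + ((((c s i).erase i).filter (fun j => lam < P ω j)).card : ℝ))⁻¹ with hYf
  -- pointwise term computation
  have hterm : ∀ (ω : Ω) (s : Fin S) (i : Fin N),
      (wh s i (Function.update (P ω) i 0))⁻¹
        = ((N : ℝ) * (1 - lam)) * (((M s : ℝ))⁻¹ * Yf s i ω) := by
    intro ω s i
    have hpi : Function.update (P ω) i 0 i = (0 : ℝ) := Function.update_self i 0 (P ω)
    have hfe : ∀ j ∈ (c s i).erase i, Function.update (P ω) i 0 j = P ω j := fun j hj =>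
      Function.update_of_ne (Finset.mem_erase.1 hj).1 0 (P ω)
    have hiF : i ∈ (c s i).filter (fun j => Function.update (P ω) i 0 j ≤ lam) :=
      Finset.mem_filter.2 ⟨hmem s i, by rw [hpi]; exact hlam.1.le⟩
    have hR1 : ((c s i).filter (fun j => Function.update (P ω) i 0 j ≤ lam)).card
        = (((c s i).erase i).filter (fun j => P ω j ≤ lam)).card + 1 := by
      have hfeq : ((c s i).erase i).filter (fun j => Function.update (P ω) i 0 j ≤ lam)
          = ((c s i).erase i).filter (fun j => P ω j ≤ lam) :=
        Finset.filter_congr (fun j hj => by rw [hfe j hj])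
      rw [← Finset.card_erase_add_one hiF, ← Finset.filter_erase, hfeq]
    have hpartition : (((c s i).erase i).filter (fun j => P ω j ≤ lam)).card
        + (((c s i).erase i).filter (fun j => lam < P ω j)).card + 1 = (c s i).card := by
      have h1 : (((c s i).erase i).filter (fun j => P ω j ≤ lam)).card
          + (((c s i).erase i).filter (fun j => lam < P ω j)).card
          = ((c s i).erase i).card := by
        have hfeq2 : ((c s i).erase i).filter (fun j => ¬ P ω j ≤ lam)
            = ((c s i).erase i).filter (fun j => lam < P ω j) :=
          Finset.filter_congr (fun j _ => by rw [not_le])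
        rw [← Finset.card_filter_add_card_filter_not
          (s := (c s i).erase i) (fun j => P ω j ≤ lam), hfeq2]
      rw [h1]
      exact Finset.card_erase_add_one (hmem s i)
    have hcast : ((c s i).card : ℝ)
        - ((R s i (Function.update (P ω) i 0) : ℕ) : ℝ) + 1
        = 1 + ((((c s i).erase i).filter (fun j => lam < P ω j)).card : ℝ) := by
      rw [hR, hR1]
      have hn : ((c s i).card : ℝ)
          = ((((c s i).erase i).filter (fun j => P ω j ≤ lam)).card : ℝ)
            + ((((c s i).erase i).filter (fun j => lam < P ω j)).card : ℝ) + 1 := by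
        exact_mod_cast hpartition.symm
      rw [hn]; push_cast; ring
    rw [hwh, hcast, hYf]
    rw [div_eq_mul_inv, mul_inv, mul_inv, inv_inv]
    ring
  have h_eq : ∀ ω : Ω, ∑ i ∈ I0, 1 / Wh i (Function.update (P ω) i 0)
      = ∑ s : Fin S, ∑ i ∈ I0, (K * ((M s : ℝ))⁻¹) * Yf s i ω := by
    intro ω
    simp only [hWh, one_div, inv_inv]
    simp_rw [hterm ω]
    simp_rw [Finset.mul_sum]
    rw [Finset.sum_comm]
    refine Finset.sum_congr rfl fun s _ => Finset.sum_congr rfl fun i _ => ?_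
    rw [hK]; ring
  -- integrability
  have h1lam : (0:ℝ) < 1 - lam := by linarith [hlam.2]
  have hYmeas : ∀ s i, Measurable (Yf s i) := fun s i => measY P hPmeas lam _
  have hYnonneg : ∀ s i ω, 0 ≤ Yf s i ω := fun s i ω => by
    simp only [hYf]; positivity
  have hYint : ∀ s i, Integrable (Yf s i) μ := by
    intro s i
    refine (integrable_const (1:ℝ)).mono' (hYmeas s i).aestronglyMeasurable
      (ae_of_all _ fun ω => ?_)
    rw [Real.norm_eq_abs, abs_of_nonneg (hYnonneg s i ω)]
    simp only [hYf]
    rw [inv_le_one_iff₀]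
    right
    have : (0:ℝ) ≤ ((((c s i).erase i).filter (fun j => lam < P ω j)).card : ℝ) := by positivity
    linarith
  have hint : ∀ s (i : Fin N), Integrable (fun ω => (K * ((M s : ℝ))⁻¹) * Yf s i ω) μ :=
    fun s i => (hYint s i).const_mul _
  have hKMnonneg : ∀ s : Fin S, (0:ℝ) ≤ K * ((M s : ℝ))⁻¹ := by
    intro s
    have hK0 : (0:ℝ) ≤ K := by rw [hK]; positivity
    have : (0:ℝ) ≤ ((M s : ℝ))⁻¹ := by positivity
    positivity
  -- M s ≠ 0
  have hMpos : ∀ s : Fin S, 0 < M s := by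
    intro s
    rw [hM]
    have : Nonempty (Fin N) := Fin.pos_iff_nonempty.1 hN
    exact Finset.card_pos.2 (Finset.univ_nonempty.image (c s))
  -- per-s fiber bound
  have hfiber : ∀ s : Fin S, ∑ i ∈ I0, ∫ ω, Yf s i ω ∂μ ≤ (M s : ℝ) * (1 - lam)⁻¹ := by
    intro s
    rw [← Finset.sum_fiberwise_of_maps_to (g := c s) (t := Finset.univ.image (c s))
      (fun i _ => Finset.mem_image_of_mem (c s) (Finset.mem_univ i))
      (fun i => ∫ ω, Yf s i ω ∂μ)]
    have hgroup : ∀ G ∈ Finset.univ.image (c s),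
        ∑ i ∈ I0.filter (fun i => c s i = G), ∫ ω, Yf s i ω ∂μ ≤ (1 - lam)⁻¹ := by
      intro G _
      have hcongr : ∀ i ∈ I0.filter (fun i => c s i = G),
          ∫ ω, Yf s i ω ∂μ
            = ∫ ω, (1 + (((G.erase i).filter (fun j => lam < P ω j)).card : ℝ))⁻¹ ∂μ := by
        intro i hi
        have hG : c s i = G := (Finset.mem_filter.1 hi).2
        simp only [hYf, hG]
      rw [Finset.sum_congr rfl hcongr]
      refine group_bound μ P hPmeas hIndep lam hlam G _ ?_ ?_
      · intro i hi
        have h' := Finset.mem_filter.1 hi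
        rw [← h'.2]; exact hmem s i
      · intro i hi
        exact hUnif i (Finset.mem_filter.1 hi).1 lam ⟨hlam.1.le, hlam.2.le⟩
    calc ∑ G ∈ Finset.univ.image (c s), ∑ i ∈ I0.filter (fun i => c s i = G),
          ∫ ω, Yf s i ω ∂μ
        ≤ ∑ _G ∈ Finset.univ.image (c s), (1 - lam)⁻¹ := Finset.sum_le_sum hgroup
      _ = (M s : ℝ) * (1 - lam)⁻¹ := by
          rw [Finset.sum_const, nsmul_eq_mul, hM]
  -- main calculation
  calc ∫ ω, ∑ i ∈ I0, 1 / Wh i (Function.update (P ω) i 0) ∂μ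
      = ∫ ω, ∑ s : Fin S, ∑ i ∈ I0, (K * ((M s : ℝ))⁻¹) * Yf s i ω ∂μ :=
        integral_congr_ae (ae_of_all _ h_eq)
    _ = ∑ s : Fin S, ∑ i ∈ I0, (K * ((M s : ℝ))⁻¹) * ∫ ω, Yf s i ω ∂μ := by
        rw [integral_finset_sum _ (fun s _ => integrable_finset_sum I0 (fun i _ => hint s i))]
        refine Finset.sum_congr rfl fun s _ => ?_
        rw [integral_finset_sum _ (fun i _ => hint s i)]
        exact Finset.sum_congr rfl fun i _ => integral_const_mul _ _
    _ ≤ ∑ s : Fin S, (K * ((M s : ℝ))⁻¹) * ((M s : ℝ) * (1 - lam)⁻¹) := by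
        refine Finset.sum_le_sum fun s _ => ?_
        rw [← Finset.mul_sum]
        exact mul_le_mul_of_nonneg_left (hfiber s) (hKMnonneg s)
    _ = (N : ℝ) := by
        have hSne : ((S : ℝ)) ≠ 0 := Nat.cast_ne_zero.2 hS.ne'
        have hstep : ∀ s : Fin S, (K * ((M s : ℝ))⁻¹) * ((M s : ℝ) * (1 - lam)⁻¹)
            = K * (1 - lam)⁻¹ := by
          intro s
          have hMne : ((M s : ℝ)) ≠ 0 := Nat.cast_ne_zero.2 (hMpos s).ne'
          field_simp
        rw [Finset.sum_congr rfl (fun s _ => hstep s), Finset.sum_const,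
          Finset.card_univ, Fintype.card_fin, nsmul_eq_mul, hK]
        field_simp
end

section
/- (Theorem 2 in the case L = 1, with possibly overlapping groups: FDR control of the DAHeir-GBH) Let P_1,…,P_N be mutually independent p-values with P_i ~ Uniform(0,1) for each i ∈ I^0. Fix λ ∈ (0,1) and α ∈ (0,1). Let I_1,…,I_m ⊆ {1,…,N} be m groups, possibly overlapping, whose union is {1,…,N}, with n_g = |I_g|. For p ∈ [0,1]^N define R_g(p) = #{i ∈ I_g : p_i ≤ λ}, the estimated null counts n̂^0_g(p) = (n_g − R_g(p) + 1)/(1−λ), the estimated group weights ŵ_g(p) = (n̂^0_g(p)/N)·m, and the estimated weights Ŵ_i(p) by 1/Ŵ_i(p) = ((1/N)·Σ_{g=1}^m n̂^0_g(p)/ŵ_g(p))^{-1} · Σ_{g' : i ∈ I_{g'}} 1/ŵ_{g'}(p). Then the level-α BH procedure applied to the weighted p-values Ŵ_i(P)·P_i has FDR ≤ α. -/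
open MeasureTheory ProbabilityTheory Finset

section BH

variable {N : ℕ} {α : ℝ} {Q Q' : Fin N → ℝ}

lemma bhNum_le (N : ℕ) (α : ℝ) (Q : Fin N → ℝ) : bhNumRejections N α Q ≤ N := by
  unfold bhNumRejections
  apply Finset.sup_le
  intro j hj
  simp only [Finset.mem_filter, Finset.mem_range] at hj
  simpa [id] using Nat.lt_succ_iff.mp hj.1

lemma bhNum_mem (N : ℕ) (α : ℝ) (Q : Fin N → ℝ) :
    bhNumRejections N α Q ∈ (Finset.range (N + 1)).filter
      (fun j : ℕ => j ≤ (Finset.univ.filter (fun i : Fin N => Q i ≤ (j : ℝ) * α / N)).card) := by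
  have hne : ((Finset.range (N + 1)).filter
      (fun j : ℕ => j ≤ (Finset.univ.filter (fun i : Fin N => Q i ≤ (j : ℝ) * α / N)).card)).Nonempty := by
    refine ⟨0, ?_⟩
    simp
  obtain ⟨b, hb, hbeq⟩ := Finset.exists_mem_eq_sup _ hne id
  unfold bhNumRejections
  rw [hbeq]
  exact hb

lemma bhNum_spec (N : ℕ) (α : ℝ) (Q : Fin N → ℝ) :
    bhNumRejections N α Q ≤
      (Finset.univ.filter (fun i : Fin N => Q i ≤ (bhNumRejections N α Q : ℝ) * α / N)).card := by
  have := bhNum_mem N α Q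
  simp only [Finset.mem_filter] at this
  exact this.2

lemma le_bhNum {j : ℕ} (hj : j ≤ N)
    (h : j ≤ (Finset.univ.filter (fun i : Fin N => Q i ≤ (j : ℝ) * α / N)).card) :
    j ≤ bhNumRejections N α Q := by
  unfold bhNumRejections
  have : j ∈ (Finset.range (N + 1)).filter
      (fun j : ℕ => j ≤ (Finset.univ.filter (fun i : Fin N => Q i ≤ (j : ℝ) * α / N)).card) := by
    simp only [Finset.mem_filter, Finset.mem_range]
    exact ⟨Nat.lt_succ_of_le hj, h⟩
  exact Finset.le_sup (f := id) this

lemma card_bhRejected (hN : 0 < N) (hα : 0 ≤ α) (Q : Fin N → ℝ) :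
    (bhRejected N α Q).card = bhNumRejections N α Q := by
  set k := bhNumRejections N α Q with hk
  have h1 : k ≤ (bhRejected N α Q).card := bhNum_spec N α Q
  by_contra hne
  have hlt : k < (bhRejected N α Q).card := lt_of_le_of_ne h1 (fun h => hne h.symm)
  set c := (bhRejected N α Q).card with hc
  have hcN : c ≤ N := by
    calc c ≤ Finset.univ.card := Finset.card_filter_le _ _
    _ = N := by simp
  have hNpos : (0:ℝ) < N := by exact_mod_cast hN
  have hsub : bhRejected N α Q ⊆ Finset.univ.filter (fun i : Fin N => Q i ≤ (c : ℝ) * α / N) := by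
    intro i hi
    simp only [bhRejected, Finset.mem_filter, Finset.mem_univ, true_and] at hi ⊢
    refine hi.trans ?_
    have : (k:ℝ) ≤ (c:ℝ) := by exact_mod_cast hlt.le
    gcongr
  have : c ≤ k := le_bhNum hcN (le_trans le_rfl (Finset.card_le_card hsub))
  omega

lemma bhNum_anti (h : ∀ i, Q i ≤ Q' i) :
    bhNumRejections N α Q' ≤ bhNumRejections N α Q := by
  unfold bhNumRejections
  apply Finset.sup_mono
  intro j hj
  simp only [Finset.mem_filter, Finset.mem_range] at hj ⊢
  refine ⟨hj.1, hj.2.trans (Finset.card_le_card ?_)⟩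
  intro i hi
  simp only [Finset.mem_filter, Finset.mem_univ, true_and] at hi ⊢
  exact (h i).trans hi

/-- Leave-one-out: with `Q' = update Q i 0` and `r' = bhNum Q'`, if `Q i ≤ r'·α/N`
then `bhNum Q = r'`. -/
lemma bh_loo_eq (hN : 0 < N) (hα : 0 ≤ α) (Q : Fin N → ℝ) (i : Fin N) (hQi : 0 ≤ Q i)
    (h : Q i ≤ (bhNumRejections N α (Function.update Q i 0) : ℝ) * α / N) :
    bhNumRejections N α Q = bhNumRejections N α (Function.update Q i 0) := by
  set Q' := Function.update Q i 0 with hQ'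
  set r' := bhNumRejections N α Q' with hr'
  have hle : ∀ j, Q' j ≤ Q j := by
    intro j
    by_cases hj : j = i
    · subst hj; simp [hQ', hQi]
    · simp [hQ', Function.update_of_ne hj]
  have h1 : bhNumRejections N α Q ≤ r' := bhNum_anti hle
  have h2 : r' ≤ bhNumRejections N α Q := by
    apply le_bhNum (bhNum_le N α Q')
    refine le_trans (bhNum_spec N α Q') (Finset.card_le_card ?_)
    intro j hj
    simp only [Finset.mem_filter, Finset.mem_univ, true_and] at hj ⊢
    by_cases hji : j = i
    · subst hji; exact h
    · rw [← Function.update_of_ne hji (0:ℝ) Q]; exact hj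
  omega

lemma bh_loo_mem (hN : 0 < N) (hα : 0 ≤ α) (Q : Fin N → ℝ) (i : Fin N) (hQi : 0 ≤ Q i) :
    i ∈ bhRejected N α Q ↔
      Q i ≤ (bhNumRejections N α (Function.update Q i 0) : ℝ) * α / N := by
  set Q' := Function.update Q i 0 with hQ'
  set r' := bhNumRejections N α Q' with hr'
  have hle : ∀ j, Q' j ≤ Q j := by
    intro j
    by_cases hj : j = i
    · subst hj; simp [hQ', hQi]
    · simp [hQ', Function.update_of_ne hj]
  have h1 : bhNumRejections N α Q ≤ r' := bhNum_anti hle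
  have hNpos : (0:ℝ) < N := by exact_mod_cast hN
  constructor
  · intro hi
    simp only [bhRejected, Finset.mem_filter, Finset.mem_univ, true_and] at hi
    refine hi.trans ?_
    have : (bhNumRejections N α Q : ℝ) ≤ (r':ℝ) := by exact_mod_cast h1
    gcongr
  · intro h
    have := bh_loo_eq hN hα Q i hQi h
    simp only [bhRejected, Finset.mem_filter, Finset.mem_univ, true_and]
    rw [this]
    exact h

lemma one_le_bhNum (hN : 0 < N) (hα : 0 ≤ α) {j : Fin N} (h : Q j ≤ α / N) :
    1 ≤ bhNumRejections N α Q := by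
  apply le_bhNum hN
  rw [Finset.one_le_card]
  exact ⟨j, by simpa using h⟩

end BH

section Det

lemma arith_key {lam a0 a1 : ℝ} {r0 r1 : ℕ} (hl : 0 < lam) (h0 : 1 ≤ r0) (h01 : r0 ≤ r1)
    (ha0 : 0 < a0) (ha01 : a0 ≤ a1) :
    min lam ((r1:ℝ)*a1) / r1 + max (min ((r0:ℝ)*a0) 1 - lam) 0 / r0 ≤ a1 := by
  have hr0 : (0:ℝ) < r0 := by exact_mod_cast h0
  have hr1 : (0:ℝ) < r1 := lt_of_lt_of_le hr0 (by exact_mod_cast h01)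
  have hr01 : (r0:ℝ) ≤ r1 := by exact_mod_cast h01
  rcases le_or_gt (min ((r0:ℝ)*a0) 1) lam with h | h
  · rw [max_eq_right (by linarith)]
    have : min lam ((r1:ℝ)*a1) / r1 ≤ ((r1:ℝ)*a1) / r1 := by
      gcongr; exact min_le_right _ _
    rw [mul_div_cancel_left₀ _ (ne_of_gt hr1)] at this
    simpa using this
  · have hc0 : lam < (r0:ℝ)*a0 := lt_of_lt_of_le h (min_le_left _ _)
    have hlam1 : lam ≤ (r1:ℝ)*a1 := by nlinarith
    rw [min_eq_left hlam1]
    have hmax : max (min ((r0:ℝ)*a0) 1 - lam) 0 ≤ (r0:ℝ)*a0 - lam := by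
      apply max_le
      · linarith [min_le_left ((r0:ℝ)*a0) 1]
      · linarith
    have h2 : max (min ((r0:ℝ)*a0) 1 - lam) 0 / r0 ≤ ((r0:ℝ)*a0 - lam) / r0 := by gcongr
    refine le_trans (add_le_add le_rfl h2) ?_
    rw [div_add_div _ _ (ne_of_gt hr1) (ne_of_gt hr0), div_le_iff₀ (by positivity)]
    nlinarith [mul_le_mul_of_nonneg_left ha01 (by positivity : (0:ℝ) ≤ (r1:ℝ)*r0), mul_le_mul_of_nonneg_left hr01 hl.le]

/-- Characterization of rejection of index `i` for fixed weights `W`, as the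
p-value at `i` varies. -/
lemma regime_char {N : ℕ} {α : ℝ} (hN : 0 < N) (hα : 0 ≤ α)
    (W : Fin N → ℝ) (p : Fin N → ℝ) (i : Fin N) (hWi : 0 < W i)
    (u : ℝ) (hu : 0 ≤ u) :
    (i ∈ bhRejected N α (fun j => W j * Function.update p i u j) ↔
      u ≤ (bhNumRejections N α (fun j => W j * Function.update p i 0 j) : ℝ) * α /
        (N * W i)) ∧
    (i ∈ bhRejected N α (fun j => W j * Function.update p i u j) →
      (bhRejected N α (fun j => W j * Function.update p i u j)).card =
        bhNumRejections N α (fun j => W j * Function.update p i 0 j)) := by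
  set Q : Fin N → ℝ := fun j => W j * Function.update p i u j with hQ
  have hupd : Function.update Q i 0 = fun j => W j * Function.update p i 0 j := by
    funext j
    by_cases hj : j = i
    · subst hj; simp [hQ]
    · simp [hQ, Function.update_of_ne hj]
  set r : ℕ := bhNumRejections N α (fun j => W j * Function.update p i 0 j) with hr
  have hQi : Q i = W i * u := by simp [hQ]
  have hQinn : 0 ≤ Q i := by rw [hQi]; positivity
  have hmem := bh_loo_mem hN hα Q i hQinn
  rw [hupd] at hmem
  have hiff : Q i ≤ (r:ℝ) * α / N ↔ u ≤ (r:ℝ) * α / (N * W i) := by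
    rw [hQi, ← le_div_iff₀' hWi, div_div]
  constructor
  · rw [hmem, hiff]
  · intro hrej
    have h1 : Q i ≤ (r:ℝ) * α / N := hmem.mp hrej
    have h2 := bh_loo_eq hN hα Q i hQinn (by rw [hupd]; exact h1)
    rw [hupd] at h2
    rw [card_bhRejected hN hα, h2]

end Det

section DetKey

/-- The key deterministic inner-integral bound. -/
lemma det_key {N : ℕ} {α lam : ℝ} (hN : 0 < N) (hα : 0 < α) (hlam : lam ∈ Set.Ioo (0:ℝ) 1)
    (i : Fin N) (p : Fin N → ℝ) (hp : ∀ j, 0 ≤ p j)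
    (W1 W0 : Fin N → ℝ) (hW1 : ∀ j, 0 < W1 j) (hW0 : ∀ j, 0 < W0 j)
    (hWle : ∀ j, W1 j ≤ W0 j) :
    (∫ u in Set.Icc (0:ℝ) 1,
      ((if i ∈ bhRejected N α (fun j => (if u ≤ lam then W1 j else W0 j) * Function.update p i u j)
          then (1:ℝ) else 0) /
        max ((bhRejected N α (fun j => (if u ≤ lam then W1 j else W0 j) * Function.update p i u j)).card : ℝ) 1))
      ≤ α / (N * W1 i) := by
  obtain ⟨hl0, hl1⟩ := hlam
  have hNpos : (0:ℝ) < N := by exact_mod_cast hN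
  set q1 : Fin N → ℝ := fun j => W1 j * Function.update p i 0 j with hq1
  set q0 : Fin N → ℝ := fun j => W0 j * Function.update p i 0 j with hq0
  set r1 : ℕ := bhNumRejections N α q1 with hr1
  set r0 : ℕ := bhNumRejections N α q0 with hr0
  have hupd_nn : ∀ j, 0 ≤ Function.update p i 0 j := by
    intro j
    by_cases hj : j = i
    · subst hj; simp
    · simp [Function.update_of_ne hj, hp j]
  have hr1pos : 1 ≤ r1 := by
    apply one_le_bhNum hN hα.le (j := i)
    have : q1 i = 0 := by simp [hq1]
    rw [this]; positivity
  have hr0pos : 1 ≤ r0 := by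
    apply one_le_bhNum hN hα.le (j := i)
    have : q0 i = 0 := by simp [hq0]
    rw [this]; positivity
  have hr01 : r0 ≤ r1 := by
    apply bhNum_anti
    intro j
    exact mul_le_mul_of_nonneg_right (hWle j) (hupd_nn j)
  set a1 : ℝ := α / (N * W1 i) with ha1
  set a0 : ℝ := α / (N * W0 i) with ha0
  have ha1pos : 0 < a1 := div_pos hα (mul_pos hNpos (hW1 i))
  have ha0pos : 0 < a0 := div_pos hα (mul_pos hNpos (hW0 i))
  have ha01 : a0 ≤ a1 :=
    div_le_div_of_nonneg_left hα.le (mul_pos hNpos (hW1 i))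
      (mul_le_mul_of_nonneg_left (hWle i) hNpos.le)
  set c1 : ℝ := (r1:ℝ) * a1 with hc1
  set c0 : ℝ := (r0:ℝ) * a0 with hc0
  have hc1a : (r1:ℝ) * α / (N * W1 i) = c1 := by rw [hc1, ha1]; ring
  have hc0a : (r0:ℝ) * α / (N * W0 i) = c0 := by rw [hc0, ha0]; ring
  have hr1R : (1:ℝ) ≤ r1 := by exact_mod_cast hr1pos
  have hr0R : (1:ℝ) ≤ r0 := by exact_mod_cast hr0pos
  have hc1pos : 0 < c1 := by rw [hc1]; exact mul_pos (by linarith) ha1pos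
  set b1 : ℝ := min lam c1 with hb1
  set b0 : ℝ := min c0 1 with hb0
  have hb1nn : 0 ≤ b1 := le_min hl0.le hc1pos.le
  have hb1le : b1 ≤ 1 := le_trans (min_le_left _ _) hl1.le
  have hb1lam : b1 ≤ lam := min_le_left _ _
  set g1 : ℝ → ℝ := (Set.Icc (0:ℝ) b1).indicator (fun _ => (r1:ℝ)⁻¹) with hg1
  set g2 : ℝ → ℝ := (Set.Ioc lam b0).indicator (fun _ => (r0:ℝ)⁻¹) with hg2
  have hpt : ∀ u ∈ Set.Icc (0:ℝ) 1,
      ((if i ∈ bhRejected N α (fun j => (if u ≤ lam then W1 j else W0 j) * Function.update p i u j)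
          then (1:ℝ) else 0) /
        max ((bhRejected N α (fun j => (if u ≤ lam then W1 j else W0 j) * Function.update p i u j)).card : ℝ) 1)
        = g1 u + g2 u := by
    intro u hu
    obtain ⟨hu0, hu1⟩ := hu
    by_cases hul : u ≤ lam
    · have hfun : (fun j => (if u ≤ lam then W1 j else W0 j) * Function.update p i u j)
          = fun j => W1 j * Function.update p i u j := by
        funext j; simp [hul]
      rw [hfun]
      have hchar := regime_char hN hα.le W1 p i (hW1 i) u hu0
      have hg2z : g2 u = 0 := by
        rw [hg2, Set.indicator_apply_eq_zero]
        intro hmem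
        exact absurd hmem.1 (not_lt.mpr hul)
      rw [hg2z, add_zero]
      by_cases hrej : i ∈ bhRejected N α (fun j => W1 j * Function.update p i u j)
      · have hcard := hchar.2 hrej
        have huc1 : u ≤ c1 := by
          have h := hchar.1.mp hrej
          rwa [hc1a] at h
        rw [if_pos hrej, hcard]
        have hmem : u ∈ Set.Icc (0:ℝ) b1 := ⟨hu0, le_min hul huc1⟩
        rw [hg1, Set.indicator_of_mem hmem]
        rw [max_eq_left hr1R, one_div]
      · have huc1 : ¬ u ≤ c1 := by
          intro hc
          apply hrej
          apply hchar.1.mpr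
          rw [hc1a]
          exact hc
        rw [if_neg hrej, zero_div]
        rw [hg1, Set.indicator_of_notMem]
        intro hmem
        exact huc1 (le_trans hmem.2 (min_le_right _ _))
    · have hfun : (fun j => (if u ≤ lam then W1 j else W0 j) * Function.update p i u j)
          = fun j => W0 j * Function.update p i u j := by
        funext j; simp [hul]
      rw [hfun]
      have hchar := regime_char hN hα.le W0 p i (hW0 i) u hu0
      have hg1z : g1 u = 0 := by
        rw [hg1, Set.indicator_apply_eq_zero]
        intro hmem
        exact absurd (le_trans hmem.2 hb1lam) hul
      rw [hg1z, zero_add]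
      by_cases hrej : i ∈ bhRejected N α (fun j => W0 j * Function.update p i u j)
      · have hcard := hchar.2 hrej
        have huc0 : u ≤ c0 := by
          have h := hchar.1.mp hrej
          rwa [hc0a] at h
        rw [if_pos hrej, hcard]
        have hmem : u ∈ Set.Ioc lam b0 := ⟨not_le.mp hul, le_min huc0 hu1⟩
        rw [hg2, Set.indicator_of_mem hmem]
        rw [max_eq_left hr0R, one_div]
      · have huc0 : ¬ u ≤ c0 := by
          intro hc
          apply hrej
          apply hchar.1.mpr
          rw [hc0a]
          exact hc
        rw [if_neg hrej, zero_div]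
        rw [hg2, Set.indicator_of_notMem]
        intro hmem
        exact huc0 (le_trans hmem.2 (min_le_left _ _))
  rw [MeasureTheory.setIntegral_congr_fun measurableSet_Icc hpt]
  have hint1 : MeasureTheory.IntegrableOn g1 (Set.Icc (0:ℝ) 1) := by
    rw [hg1]
    exact (MeasureTheory.integrable_const _).indicator measurableSet_Icc
  have hint2 : MeasureTheory.IntegrableOn g2 (Set.Icc (0:ℝ) 1) := by
    rw [hg2]
    exact (MeasureTheory.integrable_const _).indicator measurableSet_Ioc
  rw [MeasureTheory.integral_add hint1 hint2]
  have hI1 : ∫ u in Set.Icc (0:ℝ) 1, g1 u = b1 * (r1:ℝ)⁻¹ := by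
    rw [hg1, MeasureTheory.setIntegral_indicator measurableSet_Icc,
      Set.inter_eq_self_of_subset_right (Set.Icc_subset_Icc le_rfl hb1le),
      MeasureTheory.setIntegral_const, measureReal_def, Real.volume_Icc, smul_eq_mul, sub_zero,
      ENNReal.toReal_ofReal hb1nn]
  have hsub2 : Set.Icc (0:ℝ) 1 ∩ Set.Ioc lam b0 = Set.Ioc lam b0 := by
    apply Set.inter_eq_self_of_subset_right
    intro x hx
    exact ⟨le_trans hl0.le hx.1.le, le_trans hx.2 (min_le_right _ _)⟩
  have hI2 : ∫ u in Set.Icc (0:ℝ) 1, g2 u = max (b0 - lam) 0 * (r0:ℝ)⁻¹ := by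
    rw [hg2, MeasureTheory.setIntegral_indicator measurableSet_Ioc, hsub2,
      MeasureTheory.setIntegral_const, measureReal_def, Real.volume_Ioc, smul_eq_mul]
    rcases le_total (b0 - lam) 0 with h | h
    · rw [ENNReal.ofReal_eq_zero.mpr h, ENNReal.toReal_zero, max_eq_right h]
    · rw [ENNReal.toReal_ofReal h, max_eq_left h]
  rw [hI1, hI2]
  have harith := arith_key (r0 := r0) (r1 := r1) hl0 hr0pos hr01 ha0pos ha01
  calc b1 * (r1:ℝ)⁻¹ + max (b0 - lam) 0 * (r0:ℝ)⁻¹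
      = min lam ((r1:ℝ)*a1) / r1 + max (min ((r0:ℝ)*a0) 1 - lam) 0 / r0 := by
        rw [hb1, hb0, hc1, hc0, div_eq_mul_inv, div_eq_mul_inv]
    _ ≤ a1 := harith

end DetKey

section Meas

lemma measurable_finset_sup_nat {X : Type*} [MeasurableSpace X] {ι : Type*} (s : Finset ι)
    (f : ι → X → ℕ) (hf : ∀ i, Measurable (f i)) :
    Measurable (fun x => s.sup (fun i => f i x)) := by
  classical
  induction s using Finset.induction_on with
  | empty => simpa using measurable_const
  | insert _ _ h ih => simp only [Finset.sup_insert]; exact (hf _).sup ih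

lemma measurable_filter_card {N : ℕ} (c : ℝ) :
    Measurable (fun q : Fin N → ℝ => (Finset.univ.filter (fun i : Fin N => q i ≤ c)).card) := by
  have : (fun q : Fin N → ℝ => (Finset.univ.filter (fun i : Fin N => q i ≤ c)).card)
      = fun q => ∑ i : Fin N, if q i ≤ c then 1 else 0 := by
    funext q
    rw [Finset.card_filter]
  rw [this]
  apply Finset.measurable_sum
  intro i _
  apply Measurable.ite ((measurable_pi_apply i) measurableSet_Iic) measurable_const
    measurable_const

lemma bhNum_eq_sup (N : ℕ) (α : ℝ) (Q : Fin N → ℝ) :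
    bhNumRejections N α Q = (Finset.range (N+1)).sup
      (fun j => if j ≤ (Finset.univ.filter (fun i : Fin N => Q i ≤ (j : ℝ) * α / N)).card
        then j else 0) := by
  apply le_antisymm
  · apply Finset.sup_le
    intro j hj
    simp only [Finset.mem_filter, Finset.mem_range] at hj
    have : j ∈ Finset.range (N+1) := Finset.mem_range.mpr hj.1
    refine le_trans ?_ (Finset.le_sup this)
    simp [hj.2]
  · apply Finset.sup_le
    intro j hj
    by_cases h : j ≤ (Finset.univ.filter (fun i : Fin N => Q i ≤ (j : ℝ) * α / N)).card
    · simp only [if_pos h]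
      exact Finset.le_sup (f := id) (by simp only [Finset.mem_filter]; exact ⟨hj, h⟩)
    · simp [h]

lemma measurable_bhNum (N : ℕ) (α : ℝ) :
    Measurable (fun q : Fin N → ℝ => bhNumRejections N α q) := by
  have : (fun q : Fin N → ℝ => bhNumRejections N α q) = fun q =>
      (Finset.range (N+1)).sup
        (fun j => if j ≤ (Finset.univ.filter (fun i : Fin N => q i ≤ (j : ℝ) * α / N)).card
          then j else 0) := by
    funext q; exact bhNum_eq_sup N α q
  rw [this]
  apply measurable_finset_sup_nat
  intro j
  have hm := measurable_filter_card (N := N) ((j : ℝ) * α / N)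
  apply Measurable.ite _ measurable_const measurable_const
  exact hm (Set.Countable.measurableSet (Set.to_countable _))

lemma measurable_cast_nat {X : Type*} [MeasurableSpace X] {f : X → ℕ} (hf : Measurable f) :
    Measurable (fun x => (f x : ℝ)) := by
  exact Measurable.comp (measurable_from_top) hf

lemma measurableSet_mem_bhRejected {N : ℕ} (α : ℝ) (i : Fin N) :
    MeasurableSet {q : Fin N → ℝ | i ∈ bhRejected N α q} := by
  have : {q : Fin N → ℝ | i ∈ bhRejected N α q}
      = {q : Fin N → ℝ | q i ≤ (bhNumRejections N α q : ℝ) * α / N} := by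
    ext q; simp [bhRejected]
  rw [this]
  apply measurableSet_le (measurable_pi_apply i)
  exact ((measurable_cast_nat (measurable_bhNum N α)).mul_const α).div_const _

lemma measurable_card_bhRejected {N : ℕ} (α : ℝ) :
    Measurable (fun q : Fin N → ℝ => ((bhRejected N α q).card : ℝ)) := by
  apply measurable_cast_nat
  have : (fun q : Fin N → ℝ => (bhRejected N α q).card)
      = fun q => ∑ i : Fin N, if i ∈ bhRejected N α q then 1 else 0 := by
    funext q
    rw [bhRejected, Finset.card_filter]
    congr 1
    funext i
    simp [bhRejected]
  rw [this]
  apply Finset.measurable_sum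
  intro i _
  exact Measurable.ite (measurableSet_mem_bhRejected α i) measurable_const measurable_const

end Meas

section Prob

open MeasureTheory

lemma map_uniform {Ω : Type*} [MeasurableSpace Ω] (μ : Measure Ω) [IsProbabilityMeasure μ]
    (f : Ω → ℝ) (hf : Measurable f) (hrange : ∀ ω, f ω ∈ Set.Icc (0:ℝ) 1)
    (hcdf : ∀ x ∈ Set.Icc (0:ℝ) 1, μ {ω | f ω ≤ x} = ENNReal.ofReal x) :
    μ.map f = MeasureTheory.volume.restrict (Set.Icc (0:ℝ) 1) := by
  have hprob : IsProbabilityMeasure (μ.map f) := Measure.isProbabilityMeasure_map hf.aemeasurable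
  apply MeasureTheory.Measure.ext_of_Iic
  intro a
  rw [MeasureTheory.Measure.map_apply hf measurableSet_Iic,
      MeasureTheory.Measure.restrict_apply measurableSet_Iic]
  rcases lt_or_ge a 0 with ha | ha
  · have h1 : f ⁻¹' Set.Iic a = ∅ := by
      ext ω
      simp only [Set.mem_preimage, Set.mem_Iic, Set.mem_empty_iff_false, iff_false, not_le]
      exact lt_of_lt_of_le ha (hrange ω).1
    have h2 : Set.Iic a ∩ Set.Icc (0:ℝ) 1 = ∅ := by
      ext x
      simp only [Set.mem_inter_iff, Set.mem_Iic, Set.mem_Icc, Set.mem_empty_iff_false, iff_false]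
      rintro ⟨hx1, hx2, _⟩
      linarith
    rw [h1, h2]
    simp
  rcases le_or_gt a 1 with ha1 | ha1
  · have h1 : f ⁻¹' Set.Iic a = {ω | f ω ≤ a} := rfl
    have h2 : Set.Iic a ∩ Set.Icc (0:ℝ) 1 = Set.Icc 0 a := by
      ext x
      simp only [Set.mem_inter_iff, Set.mem_Iic, Set.mem_Icc]
      constructor
      · rintro ⟨hx1, hx2, _⟩; exact ⟨hx2, hx1⟩
      · rintro ⟨hx1, hx2⟩; exact ⟨hx2, hx1, le_trans hx2 ha1⟩
    rw [h1, h2, Real.volume_Icc, sub_zero]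
    exact hcdf a ⟨ha, ha1⟩
  · have h1 : f ⁻¹' Set.Iic a = Set.univ := by
      ext ω
      simp only [Set.mem_preimage, Set.mem_Iic, Set.mem_univ, iff_true]
      exact le_trans (hrange ω).2 ha1.le
    have h2 : Set.Iic a ∩ Set.Icc (0:ℝ) 1 = Set.Icc 0 1 := by
      apply Set.inter_eq_self_of_subset_right
      intro x hx
      exact le_trans hx.2 ha1.le
    rw [h1, h2, Real.volume_Icc, sub_zero, ENNReal.ofReal_one, measure_univ]

end Prob

section Binom

open MeasureTheory

lemma binom_algebra {lam : ℝ} (hl0 : 0 < lam) (hl1 : lam < 1) (s : ℕ) :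
    ∑ k ∈ Finset.range (s+1), ((s.choose k : ℝ) * ((1-lam)^k * lam^(s-k))) / (1+(k:ℝ))
      ≤ 1/((1 - lam) * ((s:ℝ) + 1)) := by
  have hq : (0:ℝ) < 1 - lam := by linarith
  rw [le_div_iff₀ (by positivity)]
  have key : (∑ k ∈ Finset.range (s+1), ((s.choose k : ℝ) * ((1-lam)^k * lam^(s-k))) / (1+(k:ℝ)))
        * ((1-lam)*((s:ℝ)+1))
      = ∑ k ∈ Finset.range (s+1), (((s+1).choose (k+1) : ℝ) * ((1-lam)^(k+1) * lam^(s-k))) := by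
    rw [Finset.sum_mul]
    apply Finset.sum_congr rfl
    intro k hk
    have hch : ((s:ℝ)+1) * (s.choose k : ℝ) = ((s+1).choose (k+1) : ℝ) * ((k:ℝ)+1) := by
      exact_mod_cast congrArg (Nat.cast (R := ℝ)) (Nat.add_one_mul_choose_eq s k)
    have hk1 : (1:ℝ)+(k:ℝ) ≠ 0 := by positivity
    rw [div_mul_eq_mul_div, div_eq_iff hk1]
    linear_combination ((1-lam)^(k+1) * lam^(s-k)) * hch
  rw [key]
  have exp1 : ∑ j ∈ Finset.range (s+2), ((s+1).choose j : ℝ) * ((1-lam)^j * lam^(s+1-j)) = 1 := by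
    calc ∑ j ∈ Finset.range (s+2), ((s+1).choose j : ℝ) * ((1-lam)^j * lam^(s+1-j))
        = ∑ m ∈ Finset.range (s+1+1), (1-lam)^m * lam^(s+1-m) * ((s+1).choose m : ℝ) := by
          apply Finset.sum_congr rfl
          intro j hj
          ring
      _ = ((1-lam)+lam)^(s+1) := (add_pow (1-lam) lam (s+1)).symm
      _ = 1 := by norm_num
  have hsplit := Finset.sum_range_succ' (fun j => ((s+1).choose j : ℝ) * ((1-lam)^j * lam^(s+1-j))) (s+1)
  rw [exp1] at hsplit
  have hterm : ∀ k ∈ Finset.range (s+1),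
      (((s+1).choose (k+1) : ℝ) * ((1-lam)^(k+1) * lam^(s+1-(k+1))))
        = (((s+1).choose (k+1) : ℝ) * ((1-lam)^(k+1) * lam^(s-k))) := by
    intro k hk
    have he : s + 1 - (k+1) = s - k := by omega
    rw [he]
  have h0 : (0:ℝ) ≤ ((s+1).choose 0 : ℝ) * ((1-lam)^0 * lam^(s+1-0)) := by positivity
  calc ∑ k ∈ Finset.range (s+1), (((s+1).choose (k+1) : ℝ) * ((1-lam)^(k+1) * lam^(s-k)))
      = ∑ k ∈ Finset.range (s+1), (((s+1).choose (k+1) : ℝ) * ((1-lam)^(k+1) * lam^(s+1-(k+1)))) := by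
        exact (Finset.sum_congr rfl hterm).symm
    _ ≤ 1 := by linarith

end Binom

section BinomBound

open MeasureTheory

lemma binom_bound {Ω : Type*} [MeasurableSpace Ω] (μ : Measure Ω) [IsProbabilityMeasure μ]
    {N : ℕ} (P : Ω → Fin N → ℝ) (hPmeas : Measurable P)
    (hIndep : iIndepFun (fun i ω => P ω i) μ)
    {lam : ℝ} (hl0 : 0 < lam) (hl1 : lam < 1)
    (S : Finset (Fin N)) (htail : ∀ j ∈ S, μ {ω | P ω j ≤ lam} = ENNReal.ofReal lam) :
    ∫ ω, (1:ℝ)/(1 + ((S.filter (fun j => lam < P ω j)).card : ℝ)) ∂μ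
      ≤ 1/((1 - lam) * ((S.card : ℝ) + 1)) := by
  classical
  have hq : (0:ℝ) < 1 - lam := by linarith
  -- events
  set A : Fin N → Set Ω := fun j => {ω | lam < P ω j} with hA
  have hAmeas : ∀ j, MeasurableSet (A j) := by
    intro j
    exact measurableSet_lt measurable_const ((measurable_pi_apply j).comp hPmeas)
  have hAprob : ∀ j ∈ S, μ (A j) = ENNReal.ofReal (1 - lam) := by
    intro j hj
    have hcompl : A j = {ω | P ω j ≤ lam}ᶜ := by
      ext ω; simp [hA, not_le]
    have hmeas2 : MeasurableSet {ω | P ω j ≤ lam} := by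
      exact measurableSet_le ((measurable_pi_apply j).comp hPmeas) measurable_const
    rw [hcompl, measure_compl hmeas2 (measure_ne_top μ _), htail j hj]
    rw [ENNReal.ofReal_sub 1 hl0.le, ENNReal.ofReal_one, measure_univ]
  set E : Finset (Fin N) → Set Ω := fun T => ⋂ j ∈ S, (if j ∈ T then A j else (A j)ᶜ) with hE
  have hEmeas : ∀ T, MeasurableSet (E T) := by
    intro T
    apply MeasurableSet.biInter (Set.to_countable _)
    intro j _
    by_cases hj : j ∈ T
    · simpa [hj] using hAmeas j
    · simpa [hj] using (hAmeas j).compl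
  have hEmem : ∀ T ω, ω ∈ E T ↔ ∀ j ∈ S, (lam < P ω j ↔ j ∈ T) := by
    intro T ω
    simp only [hE, Set.mem_iInter]
    constructor
    · intro h j hj
      have := h j hj
      by_cases hjT : j ∈ T
      · simp only [if_pos hjT] at this
        exact ⟨fun _ => hjT, fun _ => this⟩
      · simp only [if_neg hjT] at this
        exact ⟨fun hc => absurd hc this, fun hc => absurd hc hjT⟩
    · intro h j hj
      by_cases hjT : j ∈ T
      · simp only [if_pos hjT]
        exact (h j hj).mpr hjT
      · simp only [if_neg hjT]
        intro hc
        exact hjT ((h j hj).mp hc)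
  -- pointwise decomposition
  have hpt : ∀ ω, (1:ℝ)/(1 + ((S.filter (fun j => lam < P ω j)).card : ℝ))
      = ∑ T ∈ S.powerset, Set.indicator (E T) (fun _ => (1:ℝ)/(1 + (T.card : ℝ))) ω := by
    intro ω
    set T0 : Finset (Fin N) := S.filter (fun j => lam < P ω j) with hT0
    have hT0mem : T0 ∈ S.powerset := Finset.mem_powerset.mpr (Finset.filter_subset _ _)
    rw [Finset.sum_eq_single_of_mem T0 hT0mem]
    · rw [Set.indicator_of_mem]
      rw [hEmem]
      intro j hj
      simp [hT0, hj]
    · intro T hT hne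
      rw [Set.indicator_of_notMem]
      intro hmem
      apply hne
      rw [hEmem] at hmem
      ext j
      by_cases hj : j ∈ S
      · rw [← hmem j hj]
        simp [hT0, hj]
      · constructor
        · intro hc; exact absurd (Finset.mem_powerset.mp hT hc) hj
        · intro hc; exact absurd (Finset.mem_of_mem_filter j hc) hj
  -- measure of E T
  have hEmeasure : ∀ T ∈ S.powerset,
      (μ (E T)).toReal = (1-lam)^T.card * lam^(S.card - T.card) := by
    intro T hT
    have hTS : T ⊆ S := Finset.mem_powerset.mp hT
    rw [hE]
    rw [hIndep.meas_biInter (fun j hj => ?_)]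
    · have : ∀ j ∈ S, μ (if j ∈ T then A j else (A j)ᶜ)
          = (if j ∈ T then ENNReal.ofReal (1-lam) else ENNReal.ofReal lam) := by
        intro j hj
        by_cases hjT : j ∈ T
        · simp only [if_pos hjT]; exact hAprob j hj
        · simp only [if_neg hjT]
          rw [measure_compl (hAmeas j) (measure_ne_top μ _), measure_univ, hAprob j hj]
          rw [← ENNReal.ofReal_one, ← ENNReal.ofReal_sub 1 hq.le]
          congr 1
          ring
      rw [Finset.prod_congr rfl this, Finset.prod_ite, Finset.prod_const, Finset.prod_const]
      have h1 : S.filter (fun j => j ∈ T) = T := by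
        rw [Finset.filter_mem_eq_inter]
        exact Finset.inter_eq_right.mpr hTS
      have h2 : S.filter (fun j => ¬ j ∈ T) = S \ T := (Finset.sdiff_eq_filter S T).symm
      rw [h1, h2, Finset.card_sdiff_of_subset hTS]
      rw [ENNReal.toReal_mul, ENNReal.toReal_pow, ENNReal.toReal_pow,
        ENNReal.toReal_ofReal hq.le, ENNReal.toReal_ofReal hl0.le]
    · by_cases hjT : j ∈ T
      · simp only [if_pos hjT]
        exact ⟨Set.Ioi lam, measurableSet_Ioi, rfl⟩
      · simp only [if_neg hjT]
        exact ⟨(Set.Ioi lam)ᶜ, measurableSet_Ioi.compl, rfl⟩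
  -- integrate
  have hint : ∀ T : Finset (Fin N), Integrable
      (fun ω => Set.indicator (E T) (fun _ => (1:ℝ)/(1 + (T.card : ℝ))) ω) μ := by
    intro T
    exact (integrable_const _).indicator (hEmeas T)
  calc ∫ ω, (1:ℝ)/(1 + ((S.filter (fun j => lam < P ω j)).card : ℝ)) ∂μ
      = ∫ ω, ∑ T ∈ S.powerset, Set.indicator (E T) (fun _ => (1:ℝ)/(1 + (T.card : ℝ))) ω ∂μ := by
        apply integral_congr_ae
        exact Filter.Eventually.of_forall hpt
    _ = ∑ T ∈ S.powerset, ∫ ω, Set.indicator (E T) (fun _ => (1:ℝ)/(1 + (T.card : ℝ))) ω ∂μ := by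
        exact integral_finset_sum _ (fun T _ => hint T)
    _ = ∑ T ∈ S.powerset, (μ (E T)).toReal * ((1:ℝ)/(1 + (T.card : ℝ))) := by
        apply Finset.sum_congr rfl
        intro T _
        rw [integral_indicator_const _ (hEmeas T), smul_eq_mul, measureReal_def]
    _ = ∑ T ∈ S.powerset, ((1-lam)^T.card * lam^(S.card - T.card)) * ((1:ℝ)/(1 + (T.card : ℝ))) := by
        apply Finset.sum_congr rfl
        intro T hT
        rw [hEmeasure T hT]
    _ = ∑ k ∈ Finset.range (S.card+1), ((S.card.choose k : ℝ) * ((1-lam)^k * lam^(S.card-k))) / (1+(k:ℝ)) := by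
        rw [Finset.sum_powerset S (fun T => ((1-lam)^T.card * lam^(S.card - T.card)) * ((1:ℝ)/(1 + (T.card : ℝ))))]
        apply Finset.sum_congr rfl
        intro k hk
        have hconst : ∀ T ∈ Finset.powersetCard k S,
            ((1-lam)^T.card * lam^(S.card - T.card)) * ((1:ℝ)/(1 + (T.card : ℝ)))
              = ((1-lam)^k * lam^(S.card - k)) * ((1:ℝ)/(1 + (k : ℝ))) := by
          intro T hT
          rw [(Finset.mem_powersetCard.mp hT).2]
        rw [Finset.sum_congr rfl hconst, Finset.sum_const, nsmul_eq_mul, Finset.card_powersetCard]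
        ring
    _ ≤ 1/((1 - lam) * ((S.card : ℝ) + 1)) := binom_algebra hl0 hl1 S.card

end BinomBound

section Fubini

open MeasureTheory

lemma indep_update {Ω : Type*} [MeasurableSpace Ω] {μ : Measure Ω}
    {N : ℕ} (P : Ω → Fin N → ℝ) (hPmeas : Measurable P)
    (hIndep : iIndepFun (fun i ω => P ω i) μ)
    (i : Fin N) :
    IndepFun (fun ω => Function.update (P ω) i 0) (fun ω => P ω i) μ := by
  classical
  set S : Finset (Fin N) := Finset.univ.erase i with hS
  set T : Finset (Fin N) := {i} with hT
  have hdisj : Disjoint S T := by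
    simp [hS, hT, Finset.disjoint_singleton_right]
  have hmeas : ∀ j : Fin N, Measurable (fun ω => P ω j) := by
    intro j
    exact (measurable_pi_apply j).comp hPmeas
  have hbase := hIndep.indepFun_finset S T hdisj hmeas
  set φ : (S → ℝ) → (Fin N → ℝ) := fun v j => if h : j ∈ S then v ⟨j, h⟩ else 0 with hφ
  have hφmeas : Measurable φ := by
    apply measurable_pi_lambda
    intro j
    by_cases h : j ∈ S
    · simp only [hφ, dif_pos h]
      exact measurable_pi_apply _
    · simp only [hφ, dif_neg h]
      exact measurable_const
  set ψ : (T → ℝ) → ℝ := fun v => v ⟨i, by simp [hT]⟩ with hψ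
  have hψmeas : Measurable ψ := measurable_pi_apply _
  have hcomp := hbase.comp hφmeas hψmeas
  have h1 : (φ ∘ fun ω (j : S) => P ω j) = fun ω => Function.update (P ω) i 0 := by
    funext ω
    funext j
    by_cases hj : j = i
    · subst hj
      simp [hφ, hS]
    · have hjS : j ∈ S := by simp [hS, hj]
      simp only [Function.comp_apply, hφ, dif_pos hjS]
      rw [Function.update_of_ne hj]
  have h2 : (ψ ∘ fun ω (j : T) => P ω j) = fun ω => P ω i := by
    funext ω
    simp [hψ]
  rwa [h1, h2] at hcomp

instance : IsProbabilityMeasure (MeasureTheory.volume.restrict (Set.Icc (0:ℝ) 1)) := by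
  constructor
  rw [Measure.restrict_apply MeasurableSet.univ, Set.univ_inter, Real.volume_Icc]
  norm_num

lemma fubini_step {Ω : Type*} [MeasurableSpace Ω] (μ : Measure Ω) [IsProbabilityMeasure μ]
    {N : ℕ} (X : Ω → (Fin N → ℝ)) (U : Ω → ℝ) (hX : Measurable X) (hU : Measurable U)
    (hindep : IndepFun X U μ) (hmap : μ.map U = MeasureTheory.volume.restrict (Set.Icc (0:ℝ) 1))
    (F : ((Fin N → ℝ) × ℝ) → ℝ) (hF : Measurable F) (hFbd : ∀ x, |F x| ≤ 1)
    (G : (Fin N → ℝ) → ℝ) (hG : Measurable G) (C : ℝ) (hGbd : ∀ p, |G p| ≤ C)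
    (hbound : ∀ ω, (∫ u in Set.Icc (0:ℝ) 1, F (X ω, u)) ≤ G (X ω)) :
    ∫ ω, F (X ω, U ω) ∂μ ≤ ∫ ω, G (X ω) ∂μ := by
  have hmapX : IsProbabilityMeasure (μ.map X) := Measure.isProbabilityMeasure_map hX.aemeasurable
  have hmapXU : μ.map (fun ω => (X ω, U ω)) = (μ.map X).prod (μ.map U) :=
    (indepFun_iff_map_prod_eq_prod_map_map hX.aemeasurable hU.aemeasurable).mp hindep
  have hprodprob : IsProbabilityMeasure ((μ.map X).prod (μ.map U)) := by
    rw [hmap]; infer_instance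
  have hFint : Integrable F ((μ.map X).prod (μ.map U)) := by
    apply Integrable.mono' (integrable_const 1) hF.aestronglyMeasurable
    exact Filter.Eventually.of_forall hFbd
  have h1 : ∫ ω, F (X ω, U ω) ∂μ = ∫ x, F x ∂((μ.map X).prod (μ.map U)) := by
    rw [← hmapXU, integral_map (hX.prodMk hU).aemeasurable hF.aestronglyMeasurable]
  have h2 : ∫ x, F x ∂((μ.map X).prod (μ.map U))
      = ∫ p, (∫ u, F (p, u) ∂(μ.map U)) ∂(μ.map X) := integral_prod F hFint
  have hHmeas : StronglyMeasurable (fun p => ∫ u, F (p, u) ∂(μ.map U)) :=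
    hF.stronglyMeasurable.integral_prod_right'
  have h3 : ∫ p, (∫ u, F (p, u) ∂(μ.map U)) ∂(μ.map X)
      = ∫ ω, (∫ u, F (X ω, u) ∂(μ.map U)) ∂μ := by
    rw [integral_map hX.aemeasurable hHmeas.aestronglyMeasurable]
  have h4 : ∀ ω, (∫ u, F (X ω, u) ∂(μ.map U)) ≤ G (X ω) := by
    intro ω
    rw [hmap]
    exact hbound ω
  rw [h1, h2, h3]
  apply integral_mono ?_ ?_ h4
  · apply Integrable.mono' (integrable_const 1)
      (hHmeas.comp_measurable hX).aestronglyMeasurable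
    apply Filter.Eventually.of_forall
    intro ω
    calc |∫ u, F (X ω, u) ∂(μ.map U)| ≤ 1 * ((μ.map U) Set.univ).toReal := by
          rw [← Real.norm_eq_abs]
          apply norm_integral_le_of_norm_le_const
          apply Filter.Eventually.of_forall
          intro u
          simpa using hFbd (X ω, u)
      _ = 1 := by
          rw [hmap]
          haveI : IsProbabilityMeasure (MeasureTheory.volume.restrict (Set.Icc (0:ℝ) 1)) :=
            inferInstance
          simp
  · apply Integrable.mono' (integrable_const C) ((hG.comp hX).aestronglyMeasurable)
    exact Filter.Eventually.of_forall (fun ω => hGbd (X ω))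

end Fubini

section Weights

open Finset

variable {N m : ℕ}

/-- The group-level count of p-values below `lam`. -/
noncomputable def Rfun (lam : ℝ) (Ig : Finset (Fin N)) (p : Fin N → ℝ) : ℕ :=
  (Ig.filter (fun j => p j ≤ lam)).card

/-- The reciprocal of the data-driven weight. -/
noncomputable def invW (lam : ℝ) (I : Fin m → Finset (Fin N)) (i : Fin N) (p : Fin N → ℝ) : ℝ :=
  ∑ g ∈ Finset.univ.filter (fun g => i ∈ I g),
    ((N:ℝ)*(1-lam))/((m:ℝ)*(((I g).card:ℝ) - (Rfun lam (I g) p : ℝ) + 1))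

lemma Rfun_le (lam : ℝ) (Ig : Finset (Fin N)) (p : Fin N → ℝ) : Rfun lam Ig p ≤ Ig.card :=
  Finset.card_filter_le _ _

lemma den_pos (lam : ℝ) (Ig : Finset (Fin N)) (p : Fin N → ℝ) :
    (0:ℝ) < ((Ig.card:ℝ) - (Rfun lam Ig p : ℝ) + 1) := by
  have := Rfun_le lam Ig p
  have : (Rfun lam Ig p : ℝ) ≤ (Ig.card : ℝ) := by exact_mod_cast this
  linarith

lemma invW_pos (hN : 0 < N) (hm : 0 < m) {lam : ℝ} (hl1 : lam < 1)
    (I : Fin m → Finset (Fin N)) (i : Fin N) (p : Fin N → ℝ)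
    (hcov : ∃ g, i ∈ I g) :
    0 < invW lam I i p := by
  have hmpos : (0:ℝ) < m := by exact_mod_cast hm
  have hNpos : (0:ℝ) < N := by exact_mod_cast hN
  apply Finset.sum_pos
  · intro g _
    exact div_pos (by nlinarith) (by nlinarith [den_pos lam (I g) p])
  · obtain ⟨g, hg⟩ := hcov
    exact ⟨g, by simp [hg]⟩

end Weights

section Weights2

open Finset

variable {N m : ℕ}

lemma invW_le (hm : 0 < m) {lam : ℝ} (hl1 : lam ≤ 1)
    (I : Fin m → Finset (Fin N)) (i : Fin N) (p : Fin N → ℝ) :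
    invW lam I i p ≤ (N:ℝ)*(1-lam) := by
  have hmpos : (0:ℝ) < m := by exact_mod_cast hm
  calc invW lam I i p
      ≤ ∑ g ∈ Finset.univ.filter (fun g => i ∈ I g), ((N:ℝ)*(1-lam))/(m:ℝ) := by
        apply Finset.sum_le_sum
        intro g _
        apply div_le_div_of_nonneg_left (mul_nonneg (by positivity) (by linarith)) hmpos
        have hden := den_pos lam (I g) p
        have h1 : (1:ℝ) ≤ ((I g).card:ℝ) - (Rfun lam (I g) p : ℝ) + 1 := by
          have := Rfun_le lam (I g) p
          have : (Rfun lam (I g) p : ℝ) ≤ ((I g).card : ℝ) := by exact_mod_cast this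
          linarith
        nlinarith
    _ ≤ (m:ℝ) * (((N:ℝ)*(1-lam))/(m:ℝ)) := by
        rw [Finset.sum_const, nsmul_eq_mul]
        apply mul_le_mul_of_nonneg_right _ (div_nonneg (mul_nonneg (by positivity) (by linarith)) hmpos.le)
        have : (Finset.univ.filter (fun g => i ∈ I g)).card ≤ (Finset.univ : Finset (Fin m)).card :=
          Finset.card_filter_le _ _
        have h2 : (Finset.univ : Finset (Fin m)).card = m := by simp
        exact_mod_cast h2 ▸ this
    _ = (N:ℝ)*(1-lam) := by field_simp

lemma Rfun_update_le (lam : ℝ) (hl0 : 0 ≤ lam) (Ig : Finset (Fin N)) (p : Fin N → ℝ)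
    (i : Fin N) (u : ℝ) (hu : u ≤ lam) :
    Rfun lam Ig (Function.update p i u) = Rfun lam Ig (Function.update p i 0) := by
  unfold Rfun
  congr 1
  apply Finset.filter_congr
  intro j hj
  by_cases hji : j = i
  · subst hji
    simp [hu, hl0]
  · rw [Function.update_of_ne hji, Function.update_of_ne hji]

lemma Rfun_update_gt (lam : ℝ) (hl1 : lam < 1) (Ig : Finset (Fin N)) (p : Fin N → ℝ)
    (i : Fin N) (u : ℝ) (hu : ¬ u ≤ lam) :
    Rfun lam Ig (Function.update p i u) = Rfun lam Ig (Function.update p i 1) := by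
  unfold Rfun
  congr 1
  apply Finset.filter_congr
  intro j hj
  by_cases hji : j = i
  · subst hji
    simp [hu, not_le.mpr hl1]
  · rw [Function.update_of_ne hji, Function.update_of_ne hji]

lemma Rfun_one_le_zero (lam : ℝ) (hl0 : 0 ≤ lam) (hl1 : lam < 1) (Ig : Finset (Fin N))
    (p : Fin N → ℝ) (i : Fin N) :
    Rfun lam Ig (Function.update p i 1) ≤ Rfun lam Ig (Function.update p i 0) := by
  unfold Rfun
  apply Finset.card_le_card
  intro j hj
  simp only [Finset.mem_filter] at hj ⊢
  refine ⟨hj.1, ?_⟩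
  by_cases hji : j = i
  · subst hji
    simp [hl0]
  · rw [Function.update_of_ne hji]
    rw [Function.update_of_ne hji] at hj
    exact hj.2

lemma invW_anti (hm : 0 < m) {lam : ℝ} (hl0 : 0 ≤ lam) (hl1 : lam < 1)
    (I : Fin m → Finset (Fin N)) (i j : Fin N) (p : Fin N → ℝ) :
    invW lam I j (Function.update p i 1) ≤ invW lam I j (Function.update p i 0) := by
  have hmpos : (0:ℝ) < m := by exact_mod_cast hm
  apply Finset.sum_le_sum
  intro g _
  have hc := Rfun_one_le_zero lam hl0 hl1 (I g) p i
  have hc' : (Rfun lam (I g) (Function.update p i 1) : ℝ) ≤ (Rfun lam (I g) (Function.update p i 0) : ℝ) := by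
    exact_mod_cast hc
  apply div_le_div_of_nonneg_left (mul_nonneg (by positivity) (by linarith))
    (by nlinarith [den_pos lam (I g) (Function.update p i 0)])
  apply mul_le_mul_of_nonneg_left (by linarith) hmpos.le

lemma measurable_Rfun (lam : ℝ) (Ig : Finset (Fin N)) :
    Measurable (fun p : Fin N → ℝ => Rfun lam Ig p) := by
  have : (fun p : Fin N → ℝ => Rfun lam Ig p) = fun p => ∑ j ∈ Ig, if p j ≤ lam then 1 else 0 := by
    funext p
    unfold Rfun
    rw [Finset.card_filter]
  rw [this]
  apply Finset.measurable_sum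
  intro j _
  exact Measurable.ite ((measurable_pi_apply j) measurableSet_Iic) measurable_const measurable_const

lemma measurable_invW (lam : ℝ) (I : Fin m → Finset (Fin N)) (i : Fin N) :
    Measurable (fun p => invW lam I i p) := by
  unfold invW
  apply Finset.measurable_sum
  intro g _
  exact measurable_const.div
    (((measurable_const.sub (measurable_cast_nat (measurable_Rfun lam (I g)))).add_const 1).const_mul _)

end Weights2

section DenGe

open Finset

lemma den_ge {N : ℕ} {lam : ℝ} (hl0 : 0 ≤ lam) (Ig I0 : Finset (Fin N)) (i : Fin N)
    (hi : i ∈ Ig) (p : Fin N → ℝ) :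
    (1:ℝ) + ((((Ig ∩ I0).erase i).filter (fun j => lam < p j)).card : ℝ)
      ≤ ((Ig.card : ℝ) - (Rfun lam Ig (Function.update p i 0) : ℝ) + 1) := by
  have hpart := Finset.card_filter_add_card_filter_not
    (s := Ig) (p := fun j => Function.update p i 0 j ≤ lam)
  have hsub : (((Ig ∩ I0).erase i).filter (fun j => lam < p j))
      ⊆ Ig.filter (fun j => ¬ Function.update p i 0 j ≤ lam) := by
    intro j hj
    simp only [Finset.mem_filter, Finset.mem_erase, Finset.mem_inter] at hj
    obtain ⟨⟨hji, hjIg, _⟩, hjlam⟩ := hj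
    simp only [Finset.mem_filter]
    refine ⟨hjIg, ?_⟩
    rw [Function.update_of_ne hji]
    exact not_le.mpr hjlam
  have hcard := Finset.card_le_card hsub
  have hR : Rfun lam Ig (Function.update p i 0)
      = (Ig.filter (fun j => Function.update p i 0 j ≤ lam)).card := rfl
  have hnat : Rfun lam Ig (Function.update p i 0)
      + (Ig.filter (fun j => ¬ Function.update p i 0 j ≤ lam)).card = Ig.card := by
    rw [hR]; exact hpart
  have h1 : ((Ig.filter (fun j => ¬ Function.update p i 0 j ≤ lam)).card : ℝ)
      = (Ig.card : ℝ) - (Rfun lam Ig (Function.update p i 0) : ℝ) := by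
    have := congrArg (Nat.cast (R := ℝ)) hnat
    push_cast at this
    linarith
  have h2 : ((((Ig ∩ I0).erase i).filter (fun j => lam < p j)).card : ℝ)
      ≤ ((Ig.filter (fun j => ¬ Function.update p i 0 j ≤ lam)).card : ℝ) := by
    exact_mod_cast hcard
  linarith

end DenGe

set_option maxHeartbeats 1000000 in
/-- Theorem 2 in the case `L = 1` with possibly overlapping groups: FDR control of the
DAHeir-GBH under independence. -/
theorem daHeirGBH_oneLevel_FDR_control
    {Ω : Type*} [MeasurableSpace Ω] (μ : Measure Ω) [IsProbabilityMeasure μ]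
    {N m : ℕ} (hN : 0 < N) (hm : 0 < m) (P : Ω → Fin N → ℝ) (hPmeas : Measurable P)
    (hPrange : ∀ ω i, P ω i ∈ Set.Icc (0 : ℝ) 1)
    (I0 : Finset (Fin N))
    (hUnif : UniformNulls μ P I0)
    (hIndep : iIndepFun (fun i ω => P ω i) μ)
    (lam : ℝ) (hlam : lam ∈ Set.Ioo (0 : ℝ) 1)
    (I : Fin m → Finset (Fin N))
    (hcover : Finset.univ.biUnion I = (Finset.univ : Finset (Fin N)))
    (R : Fin m → (Fin N → ℝ) → ℕ)
    (hR : ∀ g p, R g p = ((I g).filter (fun j => p j ≤ lam)).card)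
    (nhat : Fin m → (Fin N → ℝ) → ℝ)
    (hnhat : ∀ g p, nhat g p = (((I g).card : ℝ) - (R g p : ℝ) + 1) / (1 - lam))
    (what : Fin m → (Fin N → ℝ) → ℝ)
    (hwhat : ∀ g p, what g p = (nhat g p / (N : ℝ)) * (m : ℝ))
    (Wh : Fin N → (Fin N → ℝ) → ℝ)
    (hWh : ∀ i p, 1 / Wh i p =
      ((1 / (N : ℝ)) * ∑ g, nhat g p / what g p)⁻¹ *
        ∑ g ∈ Finset.univ.filter (fun g => i ∈ I g), 1 / what g p)
    (α : ℝ) (hα : α ∈ Set.Ioo (0 : ℝ) 1) :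
    FDR μ N α I0 (fun ω i => Wh i (P ω) * P ω i) ≤ α := by
  classical
  obtain ⟨hl0, hl1⟩ := hlam
  obtain ⟨hα0, hα1⟩ := hα
  have hNpos : (0:ℝ) < N := by exact_mod_cast hN
  have hmpos : (0:ℝ) < m := by exact_mod_cast hm
  have hqpos : (0:ℝ) < 1 - lam := by linarith
  -- identify R with Rfun
  have hRf : ∀ g p, R g p = Rfun lam (I g) p := by
    intro g p; rw [hR]; rfl
  -- identify Wh with (invW)⁻¹
  have hWh_eq : ∀ i p, Wh i p = (invW lam I i p)⁻¹ := by
    intro i p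
    have hden : ∀ g : Fin m, (0:ℝ) < ((I g).card:ℝ) - (R g p : ℝ) + 1 := by
      intro g; rw [hRf]; exact den_pos lam (I g) p
    have hnh_pos : ∀ g : Fin m, 0 < nhat g p := by
      intro g; rw [hnhat]; exact div_pos (hden g) hqpos
    have hwh_pos : ∀ g : Fin m, 0 < what g p := by
      intro g; rw [hwhat]; exact mul_pos (div_pos (hnh_pos g) hNpos) hmpos
    have hratio : ∀ g : Fin m, nhat g p / what g p = (N:ℝ)/(m:ℝ) := by
      intro g
      have h1 : nhat g p ≠ 0 := ne_of_gt (hnh_pos g)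
      rw [hwhat]
      rw [div_mul_eq_mul_div, div_div_eq_mul_div]
      rw [mul_div_mul_left _ _ h1]
    have hsum1 : ((1 / (N : ℝ)) * ∑ g, nhat g p / what g p) = 1 := by
      rw [Finset.sum_congr rfl (fun g _ => hratio g), Finset.sum_const]
      simp only [Finset.card_univ, Fintype.card_fin, nsmul_eq_mul]
      field_simp
    have hterm : ∀ g : Fin m, 1 / what g p
        = ((N:ℝ)*(1-lam))/((m:ℝ)*(((I g).card:ℝ) - (Rfun lam (I g) p : ℝ) + 1)) := by
      intro g
      rw [hwhat, hnhat, ← hRf]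
      have h1 : ((I g).card:ℝ) - (R g p : ℝ) + 1 ≠ 0 := ne_of_gt (hden g)
      field_simp
    have h := hWh i p
    rw [hsum1, inv_one, one_mul] at h
    have h2 : 1 / Wh i p = invW lam I i p := by
      rw [h]
      unfold invW
      exact Finset.sum_congr rfl (fun g _ => hterm g)
    rw [one_div] at h2
    rw [← h2, inv_inv]
  have hcov : ∀ i : Fin N, ∃ g, i ∈ I g := by
    intro i
    have : i ∈ Finset.univ.biUnion I := by rw [hcover]; exact Finset.mem_univ i
    simpa [Finset.mem_biUnion] using this
  have hWpos : ∀ i p, 0 < Wh i p := by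
    intro i p
    rw [hWh_eq]
    exact inv_pos.mpr (invW_pos hN hm hl1 I i p (hcov i))
  -- measurability of weights
  have hWhfun_eq : ∀ j : Fin N, (fun p => Wh j p) = fun p => (invW lam I j p)⁻¹ := by
    intro j; funext p; exact hWh_eq j p
  have hWhmeas : ∀ j : Fin N, Measurable (fun p => Wh j p) := by
    intro j; rw [hWhfun_eq j]; exact (measurable_invW lam I j).inv
  set Qf : (Fin N → ℝ) → Fin N → ℝ := fun p j => Wh j p * p j with hQf
  have hQfmeas : Measurable Qf := by
    apply measurable_pi_lambda
    intro j
    exact (hWhmeas j).mul (measurable_pi_apply j)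
  set termf : Fin N → (Fin N → ℝ) → ℝ := fun i q =>
    (if i ∈ bhRejected N α q then (1:ℝ) else 0) / max ((bhRejected N α q).card : ℝ) 1
    with htermf
  have htermf_meas : ∀ i, Measurable (termf i) := by
    intro i
    apply Measurable.div
    · exact Measurable.ite (measurableSet_mem_bhRejected α i) measurable_const measurable_const
    · exact (measurable_card_bhRejected α).max measurable_const
  have htermf_nonneg : ∀ i q, 0 ≤ termf i q := by
    intro i q
    apply div_nonneg
    · split <;> norm_num
    · exact le_trans zero_le_one (le_max_right _ _)
  have htermf_le_one : ∀ i q, termf i q ≤ 1 := by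
    intro i q
    rw [div_le_one (lt_of_lt_of_le one_pos (le_max_right _ _))]
    split
    · exact le_max_right _ _
    · exact le_trans zero_le_one (le_max_right _ _)
  -- FDP decomposition
  have hFDP : ∀ q, FDP N α I0 q = ∑ i ∈ I0, termf i q := by
    intro q
    have h1 : ((bhRejected N α q ∩ I0).card : ℝ)
        = ∑ i ∈ I0, (if i ∈ bhRejected N α q then (1:ℝ) else 0) := by
      rw [Finset.inter_comm, ← Finset.filter_mem_eq_inter, Finset.card_filter]
      rw [Nat.cast_sum]
      apply Finset.sum_congr rfl
      intro i _
      split <;> simp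
    rw [FDP, h1, Finset.sum_div]
  have hterm_int : ∀ i : Fin N, Integrable (fun ω => termf i (Qf (P ω))) μ := by
    intro i
    apply Integrable.mono' (integrable_const 1)
      ((htermf_meas i).comp (hQfmeas.comp hPmeas)).aestronglyMeasurable
    apply Filter.Eventually.of_forall
    intro ω
    simp only [Function.comp_apply]
    rw [Real.norm_eq_abs, abs_of_nonneg (htermf_nonneg _ _)]
    exact htermf_le_one _ _
  have hFDR : FDR μ N α I0 (fun ω i => Wh i (P ω) * P ω i)
      = ∑ i ∈ I0, ∫ ω, termf i (Qf (P ω)) ∂μ := by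
    rw [FDR]
    calc ∫ ω, FDP N α I0 ((fun ω i => Wh i (P ω) * P ω i) ω) ∂μ
        = ∫ ω, ∑ i ∈ I0, termf i (Qf (P ω)) ∂μ := by
          apply integral_congr_ae
          apply Filter.Eventually.of_forall
          intro ω
          exact hFDP (Qf (P ω))
      _ = ∑ i ∈ I0, ∫ ω, termf i (Qf (P ω)) ∂μ :=
          integral_finset_sum _ (fun i _ => hterm_int i)
  -- per-index conditional bound
  have hstep : ∀ i ∈ I0, ∫ ω, termf i (Qf (P ω)) ∂μ
      ≤ (α/(N:ℝ)) * ∫ ω, invW lam I i (Function.update (P ω) i 0) ∂μ := by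
    intro i hi
    set X : Ω → (Fin N → ℝ) := fun ω => Function.update (P ω) i 0 with hX
    have hXmeas : Measurable X := by
      apply measurable_pi_lambda
      intro j
      by_cases hj : j = i
      · subst hj
        simp only [hX, Function.update_self]
        exact measurable_const
      · simp only [hX, Function.update_of_ne hj]
        exact (measurable_pi_apply j).comp hPmeas
    set U : Ω → ℝ := fun ω => P ω i with hU
    have hUmeas : Measurable U := (measurable_pi_apply i).comp hPmeas
    set F : ((Fin N → ℝ) × ℝ) → ℝ := fun x => termf i (Qf (Function.update x.1 i x.2)) with hF
    have hupdmeas : Measurable (fun x : (Fin N → ℝ) × ℝ => Function.update x.1 i x.2) := by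
      apply measurable_pi_lambda
      intro j
      by_cases hj : j = i
      · subst hj
        simp only [Function.update_self]
        exact measurable_snd
      · simp only [Function.update_of_ne hj]
        exact (measurable_pi_apply j).comp measurable_fst
    have hFmeas : Measurable F := (htermf_meas i).comp (hQfmeas.comp hupdmeas)
    have hFbd : ∀ x, |F x| ≤ 1 := by
      intro x
      rw [abs_of_nonneg (htermf_nonneg _ _)]
      exact htermf_le_one _ _
    set G : (Fin N → ℝ) → ℝ := fun p => (α/(N:ℝ)) * invW lam I i (Function.update p i 0)
      with hG
    have hupd0meas : Measurable (fun p : Fin N → ℝ => Function.update p i 0) := by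
      apply measurable_pi_lambda
      intro j
      by_cases hj : j = i
      · subst hj
        simp only [Function.update_self]
        exact measurable_const
      · simp only [Function.update_of_ne hj]
        exact measurable_pi_apply j
    have hGmeas : Measurable G :=
      ((measurable_invW lam I i).comp hupd0meas).const_mul _
    have hGbd : ∀ p, |G p| ≤ (α/(N:ℝ)) * ((N:ℝ)*(1-lam)) := by
      intro p
      have h1 := invW_pos hN hm hl1 I i (Function.update p i 0) (hcov i)
      have h2 := invW_le hm hl1.le I i (Function.update p i 0)
      rw [hG, abs_of_nonneg (by positivity)]
      apply mul_le_mul_of_nonneg_left h2 (by positivity)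
    have hmap : μ.map U = MeasureTheory.volume.restrict (Set.Icc (0:ℝ) 1) :=
      map_uniform μ U hUmeas (fun ω => hPrange ω i) (fun x hx => hUnif i hi x hx)
    have hindep : IndepFun X U μ := indep_update P hPmeas hIndep i
    have hbound : ∀ ω, (∫ u in Set.Icc (0:ℝ) 1, F (X ω, u)) ≤ G (X ω) := by
      intro ω
      set p : Fin N → ℝ := X ω with hp
      have hp_nonneg : ∀ j, 0 ≤ p j := by
        intro j
        by_cases hj : j = i
        · subst hj; simp [hp, hX]
        · simp only [hp, hX, Function.update_of_ne hj]
          exact (hPrange ω j).1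
      set W1 : Fin N → ℝ := fun j => Wh j (Function.update p i 0) with hW1d
      set W0 : Fin N → ℝ := fun j => Wh j (Function.update p i 1) with hW0d
      have hW1pos : ∀ j, 0 < W1 j := fun j => hWpos j _
      have hW0pos : ∀ j, 0 < W0 j := fun j => hWpos j _
      have hWle : ∀ j, W1 j ≤ W0 j := by
        intro j
        rw [hW1d, hW0d]
        simp only
        rw [hWh_eq, hWh_eq]
        have h1 := invW_anti hm hl0.le hl1 I i j p
        have h2 := invW_pos hN hm hl1 I j (Function.update p i 1) (hcov j)
        exact inv_anti₀ h2 h1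
      have hQeq : ∀ u : ℝ, Qf (Function.update p i u)
          = fun j => (if u ≤ lam then W1 j else W0 j) * Function.update p i u j := by
        intro u
        funext j
        by_cases hu : u ≤ lam
        · simp only [if_pos hu, hQf, hW1d]
          congr 1
          rw [hWh_eq, hWh_eq]
          congr 1
          unfold invW
          apply Finset.sum_congr rfl
          intro g _
          rw [Rfun_update_le lam hl0.le (I g) p i u hu]
        · simp only [if_neg hu, hQf, hW0d]
          congr 1
          rw [hWh_eq, hWh_eq]
          congr 1
          unfold invW
          apply Finset.sum_congr rfl
          intro g _
          rw [Rfun_update_gt lam hl1 (I g) p i u hu]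
      have hIeq : (∫ u in Set.Icc (0:ℝ) 1, F (p, u))
          = ∫ u in Set.Icc (0:ℝ) 1,
            ((if i ∈ bhRejected N α (fun j => (if u ≤ lam then W1 j else W0 j) * Function.update p i u j)
                then (1:ℝ) else 0) /
              max ((bhRejected N α (fun j => (if u ≤ lam then W1 j else W0 j) * Function.update p i u j)).card : ℝ) 1) := by
        apply MeasureTheory.setIntegral_congr_fun measurableSet_Icc
        intro u _
        simp only [hF]
        rw [hQeq u]
      have hdk := det_key hN hα0 ⟨hl0, hl1⟩ i p hp_nonneg W1 W0 hW1pos hW0pos hWle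
      have hfinal : α / ((N:ℝ) * W1 i) = G p := by
        rw [hG, hW1d]
        simp only
        rw [hWh_eq]
        have hx := invW_pos hN hm hl1 I i (Function.update p i 0) (hcov i)
        have hx' : invW lam I i (Function.update p i 0) ≠ 0 := ne_of_gt hx
        field_simp
      calc (∫ u in Set.Icc (0:ℝ) 1, F (X ω, u)) = _ := hIeq
        _ ≤ α / ((N:ℝ) * W1 i) := hdk
        _ = G p := hfinal
    have hFXU : ∀ ω, F (X ω, U ω) = termf i (Qf (P ω)) := by
      intro ω
      simp only [hF, hX, hU]
      rw [Function.update_idem, Function.update_eq_self]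
    have hGX : ∀ ω, G (X ω) = (α/(N:ℝ)) * invW lam I i (Function.update (P ω) i 0) := by
      intro ω
      simp only [hG, hX]
      rw [Function.update_idem]
    calc ∫ ω, termf i (Qf (P ω)) ∂μ
        = ∫ ω, F (X ω, U ω) ∂μ := by
          apply integral_congr_ae
          exact Filter.Eventually.of_forall (fun ω => (hFXU ω).symm)
      _ ≤ ∫ ω, G (X ω) ∂μ :=
          fubini_step μ X U hXmeas hUmeas hindep hmap F hFmeas hFbd G hGmeas _ hGbd hbound
      _ = ∫ ω, (α/(N:ℝ)) * invW lam I i (Function.update (P ω) i 0) ∂μ := by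
          apply integral_congr_ae
          exact Filter.Eventually.of_forall (fun ω => hGX ω)
      _ = (α/(N:ℝ)) * ∫ ω, invW lam I i (Function.update (P ω) i 0) ∂μ :=
          integral_const_mul _ _
  -- bound the expected reciprocal weight
  have hstep2 : ∀ i ∈ I0, ∫ ω, invW lam I i (Function.update (P ω) i 0) ∂μ
      ≤ ∑ g ∈ Finset.univ.filter (fun g => i ∈ I g), (N:ℝ)/((m:ℝ) * (((I g) ∩ I0).card : ℝ)) := by
    intro i hi
    have hmeas_g : ∀ g : Fin m, Measurable (fun ω =>
        ((N:ℝ)*(1-lam))/((m:ℝ)*(((I g).card:ℝ) - (Rfun lam (I g) (Function.update (P ω) i 0) : ℝ) + 1))) := by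
      intro g
      have hupd0meas : Measurable (fun ω : Ω => Function.update (P ω) i 0) := by
        apply measurable_pi_lambda
        intro j
        by_cases hj : j = i
        · subst hj
          simp only [Function.update_self]
          exact measurable_const
        · simp only [Function.update_of_ne hj]
          exact (measurable_pi_apply j).comp hPmeas
      exact measurable_const.div
        ((((measurable_const.sub (measurable_cast_nat ((measurable_Rfun lam (I g)).comp hupd0meas))).add_const 1)).const_mul _)
    have hbd_g : ∀ g : Fin m, ∀ ω,
        (0:ℝ) ≤ ((N:ℝ)*(1-lam))/((m:ℝ)*(((I g).card:ℝ) - (Rfun lam (I g) (Function.update (P ω) i 0) : ℝ) + 1))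
        ∧ ((N:ℝ)*(1-lam))/((m:ℝ)*(((I g).card:ℝ) - (Rfun lam (I g) (Function.update (P ω) i 0) : ℝ) + 1))
          ≤ (N:ℝ)*(1-lam) := by
      intro g ω
      have hd := den_pos lam (I g) (Function.update (P ω) i 0)
      constructor
      · apply div_nonneg (by positivity) (by nlinarith)
      · rw [div_le_iff₀ (by nlinarith)]
        have h1 : (1:ℝ) ≤ ((I g).card:ℝ) - (Rfun lam (I g) (Function.update (P ω) i 0) : ℝ) + 1 := by
          have h2 := Rfun_le lam (I g) (Function.update (P ω) i 0)
          have h3 : (Rfun lam (I g) (Function.update (P ω) i 0) : ℝ) ≤ ((I g).card : ℝ) := by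
            exact_mod_cast h2
          linarith
        have hm1 : (1:ℝ) ≤ (m:ℝ) := by exact_mod_cast hm
        have hmden : (1:ℝ) ≤ (m:ℝ) * (((I g).card:ℝ) - (Rfun lam (I g) (Function.update (P ω) i 0) : ℝ) + 1) := by
          nlinarith
        exact le_mul_of_one_le_right (by positivity) hmden
    have hint_g : ∀ g : Fin m, Integrable (fun ω =>
        ((N:ℝ)*(1-lam))/((m:ℝ)*(((I g).card:ℝ) - (Rfun lam (I g) (Function.update (P ω) i 0) : ℝ) + 1))) μ := by
      intro g
      apply Integrable.mono' (integrable_const ((N:ℝ)*(1-lam))) (hmeas_g g).aestronglyMeasurable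
      apply Filter.Eventually.of_forall
      intro ω
      rw [Real.norm_eq_abs, abs_of_nonneg (hbd_g g ω).1]
      exact (hbd_g g ω).2
    have hsum_int : (fun ω => invW lam I i (Function.update (P ω) i 0))
        = fun ω => ∑ g ∈ Finset.univ.filter (fun g => i ∈ I g),
            ((N:ℝ)*(1-lam))/((m:ℝ)*(((I g).card:ℝ) - (Rfun lam (I g) (Function.update (P ω) i 0) : ℝ) + 1)) := by
      funext ω
      unfold invW
      rfl
    rw [hsum_int]
    rw [integral_finset_sum _ (fun g _ => hint_g g)]
    apply Finset.sum_le_sum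
    intro g hg
    have higI : i ∈ I g := (Finset.mem_filter.mp hg).2
    set S : Finset (Fin N) := ((I g) ∩ I0).erase i with hS
    have hiI0g : i ∈ (I g) ∩ I0 := Finset.mem_inter.mpr ⟨higI, hi⟩
    have hScard : S.card + 1 = ((I g) ∩ I0).card := by
      rw [hS, Finset.card_erase_of_mem hiI0g]
      have : 1 ≤ ((I g) ∩ I0).card := Finset.card_pos.mpr ⟨i, hiI0g⟩
      omega
    have hSsub : ∀ j ∈ S, j ∈ I0 := by
      intro j hj
      exact (Finset.mem_inter.mp (Finset.mem_of_mem_erase hj)).2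
    have hptwise : ∀ ω,
        ((N:ℝ)*(1-lam))/((m:ℝ)*(((I g).card:ℝ) - (Rfun lam (I g) (Function.update (P ω) i 0) : ℝ) + 1))
        ≤ ((N:ℝ)*(1-lam)/(m:ℝ)) * ((1:ℝ)/(1 + ((S.filter (fun j => lam < P ω j)).card : ℝ))) := by
      intro ω
      have hge := den_ge hl0.le (I g) I0 i higI (P ω)
      have hc0 : (0:ℝ) < 1 + ((S.filter (fun j => lam < P ω j)).card : ℝ) := by positivity
      rw [div_mul_div_comm, mul_one]
      apply div_le_div_of_nonneg_left (by positivity) (by positivity)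
      exact mul_le_mul_of_nonneg_left hge hmpos.le
    have hmeas_rec : Measurable (fun ω => (1:ℝ)/(1 + ((S.filter (fun j => lam < P ω j)).card : ℝ))) := by
      have hcard : Measurable (fun ω => ((S.filter (fun j => lam < P ω j)).card : ℝ)) := by
        apply measurable_cast_nat
        have : (fun ω => (S.filter (fun j => lam < P ω j)).card)
            = fun ω => ∑ j ∈ S, if lam < P ω j then 1 else 0 := by
          funext ω
          rw [Finset.card_filter]
        rw [this]
        apply Finset.measurable_sum
        intro j _
        exact Measurable.ite (measurableSet_lt measurable_const ((measurable_pi_apply j).comp hPmeas))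
          measurable_const measurable_const
      exact measurable_const.div (hcard.const_add 1)
    have hint_rec : Integrable (fun ω => (1:ℝ)/(1 + ((S.filter (fun j => lam < P ω j)).card : ℝ))) μ := by
      apply Integrable.mono' (integrable_const 1) hmeas_rec.aestronglyMeasurable
      apply Filter.Eventually.of_forall
      intro ω
      have hpos : (0:ℝ) < 1 + ((S.filter (fun j => lam < P ω j)).card : ℝ) := by positivity
      rw [Real.norm_eq_abs, abs_of_nonneg (by positivity)]
      rw [div_le_one hpos]
      have : (0:ℝ) ≤ ((S.filter (fun j => lam < P ω j)).card : ℝ) := by positivity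
      linarith
    calc ∫ ω, ((N:ℝ)*(1-lam))/((m:ℝ)*(((I g).card:ℝ) - (Rfun lam (I g) (Function.update (P ω) i 0) : ℝ) + 1)) ∂μ
        ≤ ∫ ω, ((N:ℝ)*(1-lam)/(m:ℝ)) * ((1:ℝ)/(1 + ((S.filter (fun j => lam < P ω j)).card : ℝ))) ∂μ := by
          apply integral_mono (hint_g g) (hint_rec.const_mul _) hptwise
      _ = ((N:ℝ)*(1-lam)/(m:ℝ)) * ∫ ω, (1:ℝ)/(1 + ((S.filter (fun j => lam < P ω j)).card : ℝ)) ∂μ :=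
          integral_const_mul _ _
      _ ≤ ((N:ℝ)*(1-lam)/(m:ℝ)) * ((1:ℝ)/((1 - lam) * ((S.card : ℝ) + 1))) := by
          apply mul_le_mul_of_nonneg_left _ (by positivity)
          exact binom_bound μ P hPmeas hIndep hl0 hl1 S
            (fun j hj => hUnif j (hSsub j hj) lam ⟨hl0.le, hl1.le⟩)
      _ = (N:ℝ)/((m:ℝ) * (((I g) ∩ I0).card : ℝ)) := by
          have hcast : ((S.card : ℝ) + 1) = (((I g) ∩ I0).card : ℝ) := by
            exact_mod_cast congrArg (Nat.cast (R := ℝ)) hScard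
          rw [hcast]
          have hne : (((I g) ∩ I0).card : ℝ) ≠ 0 := by
            have : 0 < ((I g) ∩ I0).card := Finset.card_pos.mpr ⟨i, hiI0g⟩
            exact ne_of_gt (by exact_mod_cast this)
          field_simp
  -- combine everything
  rw [hFDR]
  have hchain : ∀ i ∈ I0, ∫ ω, termf i (Qf (P ω)) ∂μ
      ≤ ∑ g ∈ Finset.univ.filter (fun g => i ∈ I g), α/((m:ℝ) * (((I g) ∩ I0).card : ℝ)) := by
    intro i hi
    refine le_trans (hstep i hi) ?_
    calc (α/(N:ℝ)) * ∫ ω, invW lam I i (Function.update (P ω) i 0) ∂μ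
        ≤ (α/(N:ℝ)) * ∑ g ∈ Finset.univ.filter (fun g => i ∈ I g),
            (N:ℝ)/((m:ℝ) * (((I g) ∩ I0).card : ℝ)) := by
          apply mul_le_mul_of_nonneg_left (hstep2 i hi) (by positivity)
      _ = ∑ g ∈ Finset.univ.filter (fun g => i ∈ I g), α/((m:ℝ) * (((I g) ∩ I0).card : ℝ)) := by
          rw [Finset.mul_sum]
          apply Finset.sum_congr rfl
          intro g _
          rw [div_mul_div_comm]
          rw [mul_comm α (N:ℝ), mul_comm (N:ℝ) ((m:ℝ) * (((I g) ∩ I0).card : ℝ))]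
          rw [mul_comm ((m:ℝ) * (((I g) ∩ I0).card : ℝ)) (N:ℝ)]
          exact mul_div_mul_left _ _ (ne_of_gt hNpos)
  calc ∑ i ∈ I0, ∫ ω, termf i (Qf (P ω)) ∂μ
      ≤ ∑ i ∈ I0, ∑ g ∈ Finset.univ.filter (fun g => i ∈ I g),
          α/((m:ℝ) * (((I g) ∩ I0).card : ℝ)) := Finset.sum_le_sum hchain
    _ = ∑ g : Fin m, ∑ i ∈ I0.filter (fun i => i ∈ I g),
          α/((m:ℝ) * (((I g) ∩ I0).card : ℝ)) := by
        have h1 : ∀ i : Fin N, ∑ g ∈ Finset.univ.filter (fun g => i ∈ I g),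
            α/((m:ℝ) * (((I g) ∩ I0).card : ℝ))
            = ∑ g : Fin m, if i ∈ I g then α/((m:ℝ) * (((I g) ∩ I0).card : ℝ)) else 0 := by
          intro i
          rw [Finset.sum_filter]
        rw [Finset.sum_congr rfl (fun i _ => h1 i)]
        rw [Finset.sum_comm]
        apply Finset.sum_congr rfl
        intro g _
        rw [Finset.sum_filter]
    _ ≤ ∑ g : Fin m, α/(m:ℝ) := by
        apply Finset.sum_le_sum
        intro g _
        rw [Finset.sum_const]
        have hcf : I0.filter (fun i => i ∈ I g) = I0 ∩ (I g) := Finset.filter_mem_eq_inter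
        rw [hcf]
        by_cases hz : (I0 ∩ (I g)).card = 0
        · rw [hz]
          simp only [zero_nsmul]
          positivity
        · have hcards : (I0 ∩ (I g)).card = ((I g) ∩ I0).card := by
            rw [Finset.inter_comm]
          have hne : (((I g) ∩ I0).card : ℝ) ≠ 0 := by
            rw [← hcards]
            exact_mod_cast hz
          rw [nsmul_eq_mul, hcards]
          have heq : (((I g) ∩ I0).card : ℝ) * (α/((m:ℝ) * (((I g) ∩ I0).card : ℝ))) = α/(m:ℝ) := by
            field_simp
          rw [heq]
    _ = α := by
        rw [Finset.sum_const]
        simp only [Finset.card_univ, Fintype.card_fin, nsmul_eq_mul]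
        field_simp
end
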